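/- arXiv:2208.10275 — 11 statements merged into one kernel-verified Lean document; each statement's English description precedes it below -/
import Mathlib

section
/- For every nonnegative integer n, ∑_{k=0}^{n-1} (3k+2)·C(2k,k) = n·C(2n,n). -/
theorem Nat.succ_mul_centralBinom_succ_eq_add (n : ℕ) :
    (n + 1) * (n + 1).centralBinom = n * n.centralBinom + (3 * n + 2) * n.centralBinom := by
  rw [Nat.succ_mul_centralBinom_succ]
  ring

theorem sum_central_binom_identity (n : ℕ) :
    ∑ k ∈ Finset.range n, (3 * k + 2) * (2 * k).choose k = n * (2 * n).choose n := by
  simp only [← Nat.centralBinom_eq_two_mul_choose]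
  exact Finset.sum_range_induction _ (fun n => n * n.centralBinom) (by simp) n
    fun k _ => Nat.succ_mul_centralBinom_succ_eq_add k
end

section
/- For any prime p ≥ 5, ∑_{k=0}^{p-1} k·C(2k,k) ≡ (2/3)·(p − (p/3)) (mod p²), where 2/3 is interpreted as 2 times the inverse of 3 modulo p². -/
/-!
Since `(k + 1) C(2k+2, k+1) = 2 (2k + 1) C(2k, k)`, the sum `∑_{k<n} (3k + 2) C(2k, k)` telescopes
to `n C(2n, n)`, so `3 ∑_{k<p} k C(2k, k) = p C(2p, p) - 2 ∑_{k<p} C(2k, k)`, and it remains to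
show `C(2p, p) ≡ 2` and `∑_{k<p} C(2k, k) ≡ (p/3) (mod p²)`.

Pascal's rule gives the exact identity `∑_{k<n} C(2k, k) = ∑_{m ≤ n} (m/3) C(2n, n+m)`. By
Vandermonde, `C(2p, p+m) ≡ 2 C(p, m) (mod p²)` for `m < p`, so the right-hand side is congruent
to `(p/3) + 2 ∑_{m<p} (m/3) C(p, m)`, and this last sum vanishes for odd `p` because
`∑_{m ≤ n} (m/3) C(n, m) = (-1)ⁿ (2n/3)`. The case `p = 2` is a direct computation.
-/

def legendre3 (p : ℕ) : ℤ :=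
  if p % 3 = 1 then 1 else if p % 3 = 2 then -1 else 0

open Finset Nat

lemma legendre3_add_legendre3_add_one_add_legendre3_add_two (m : ℕ) :
    legendre3 m + legendre3 (m + 1) + legendre3 (m + 2) = 0 := by
  unfold legendre3; split_ifs <;> omega

lemma legendre3_two_mul (m : ℕ) : legendre3 (2 * m) = -legendre3 m := by
  unfold legendre3; split_ifs <;> omega

lemma sum_range_choose_mul_legendre3_add (n a : ℕ) :
    ∑ m ∈ range (n + 1), (n.choose m : ℤ) * legendre3 (m + a) =
      (-1) ^ n * legendre3 (2 * n + a) := by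
  induction n generalizing a with
  | zero => simp
  | succ n ih =>
    have hpascal := sum_choose_succ_mul (fun m _ => legendre3 (m + a)) n
    simp only [add_assoc] at hpascal
    rw [hpascal, ih a, ih (1 + a), pow_succ, show 2 * (n + 1) + a = 2 * n + a + 2 by ring,
      show 2 * n + (1 + a) = 2 * n + a + 1 by ring]
    linear_combination (-1) ^ n * legendre3_add_legendre3_add_one_add_legendre3_add_two (2 * n + a)

lemma sum_range_choose_mul_legendre3_of_odd {n : ℕ} (hn : Odd n) :
    ∑ m ∈ range n, (n.choose m : ℤ) * legendre3 m = 0 := by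
  have h := sum_range_choose_mul_legendre3_add n 0
  simp only [add_zero, sum_range_succ, choose_self, hn.neg_one_pow, legendre3_two_mul] at h
  simpa using h

lemma choose_add_two_add_two (k i : ℕ) :
    (k + 2).choose (i + 2) = k.choose i + 2 * k.choose (i + 1) + k.choose (i + 2) := by
  simp only [choose_succ_succ']; ring

/-- Summation by parts against `legendre3 j + legendre3 (j + 1) + legendre3 (j + 2) = 0`. -/
lemma sum_range_legendre3_mul_pascal (c : ℕ → ℤ) (N : ℕ) :
    ∑ j ∈ range N, legendre3 (j + 1) * (c j + 2 * c (j + 1) + c (j + 2))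
        + (legendre3 (N + 1) - legendre3 N) * c N
      = c 0 + ∑ j ∈ range N, legendre3 j * c j + legendre3 N * c (N + 1) := by
  induction N with
  | zero => simp [legendre3]
  | succ N ih =>
    rw [sum_range_succ, sum_range_succ]
    linear_combination ih + c (N + 1) * legendre3_add_legendre3_add_one_add_legendre3_add_two N

lemma sum_range_centralBinom (n : ℕ) :
    ∑ k ∈ range n, (centralBinom k : ℤ) =
      ∑ m ∈ range (n + 1), legendre3 m * ((2 * n).choose (n + m) : ℤ) := by
  induction n with
  | zero => simp [legendre3]
  | succ n ih =>
    have h := sum_range_legendre3_mul_pascal (fun j => ((2 * n).choose (n + j) : ℤ)) (n + 1)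
    simp only [add_zero, choose_eq_zero_of_lt (by omega : 2 * n < n + (n + 1)),
      choose_eq_zero_of_lt (by omega : 2 * n < n + (n + 1 + 1)), Nat.cast_zero, mul_zero,
      add_zero] at h
    rw [sum_range_succ, ih, sum_range_succ' _ (n + 1), centralBinom_eq_two_mul_choose]
    have h0 : legendre3 0 = 0 := rfl
    rw [h0, zero_mul, add_zero, add_comm, ← h]
    refine sum_congr rfl fun j _ => ?_
    rw [show 2 * (n + 1) = 2 * n + 2 by ring, show n + 1 + (j + 1) = n + j + 2 by ring,
      choose_add_two_add_two]
    push_cast [add_assoc]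
    ring

lemma Nat.Prime.sq_dvd_choose_mul_choose {p i j : ℕ} (hp : p.Prime) (hi : i ≠ p) (hj : j ≠ p)
    (hij : p ≤ i + j) : p ^ 2 ∣ p.choose i * p.choose j := by
  rcases lt_or_gt_of_ne hi with hi | hi
  · rcases lt_or_gt_of_ne hj with hj | hj
    · rw [sq]
      exact mul_dvd_mul (hp.dvd_choose_self (by omega) hi) (hp.dvd_choose_self (by omega) hj)
    · simp [choose_eq_zero_of_lt hj]
  · simp [choose_eq_zero_of_lt hi]

lemma Nat.Prime.choose_two_mul_add_modEq {p m : ℕ} (hp : p.Prime) (hm : m < p) :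
    (2 * p).choose (p + m) ≡ 2 * p.choose m [MOD p ^ 2] := by
  have hmp : (m, p) ∈ antidiagonal (p + m) := by simp [add_comm]
  have hpm : (p, m) ∈ (antidiagonal (p + m)).erase (m, p) := by simp [hm.ne']
  rw [two_mul, add_choose_eq, ← add_sum_erase _ _ hmp, ← add_sum_erase _ _ hpm, ← add_assoc]
  simp only [choose_self, mul_one, one_mul, ← two_mul]
  refine (Nat.modEq_zero_iff_dvd.2 (dvd_sum fun ij hij => ?_)).add_left _
  simp only [mem_erase, HasAntidiagonal.mem_antidiagonal, ne_eq, Prod.ext_iff] at hij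
  exact hp.sq_dvd_choose_mul_choose (by omega) (by omega) (by omega)

lemma Nat.Prime.sum_range_centralBinom_modEq {p : ℕ} (hp : p.Prime) (hodd : Odd p) :
    ∑ k ∈ range p, (centralBinom k : ℤ) ≡ legendre3 p [ZMOD p ^ 2] := by
  calc ∑ k ∈ range p, (centralBinom k : ℤ)
      = ∑ m ∈ range p, legendre3 m * ((2 * p).choose (p + m) : ℤ) + legendre3 p := by
        rw [sum_range_centralBinom, sum_range_succ, ← two_mul, choose_self, cast_one, mul_one]
    _ ≡ ∑ m ∈ range p, legendre3 m * (2 * p.choose m) + legendre3 p [ZMOD p ^ 2] := by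
        gcongr with m hm
        exact_mod_cast Int.natCast_modEq_iff.2 (hp.choose_two_mul_add_modEq (mem_range.1 hm))
    _ = 2 * ∑ m ∈ range p, (p.choose m : ℤ) * legendre3 m + legendre3 p := by
        rw [mul_sum]; congr 1; exact sum_congr rfl fun m _ => by ring
    _ = legendre3 p := by rw [sum_range_choose_mul_legendre3_of_odd hodd, mul_zero, zero_add]

lemma three_mul_sum_range_mul_centralBinom_add (n : ℕ) :
    3 * ∑ k ∈ range n, (k : ℤ) * centralBinom k +
        2 * ∑ k ∈ range n, (centralBinom k : ℤ) = n * centralBinom n := by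
  induction n with
  | zero => simp
  | succ n ih =>
    have h : ((n + 1 : ℕ) : ℤ) * centralBinom (n + 1) = 2 * (2 * n + 1) * centralBinom n := by
      exact_mod_cast succ_mul_centralBinom_succ n
    rw [sum_range_succ, sum_range_succ, h]
    linear_combination ih

theorem sum_k_central_binom_general (p : ℕ) (hp : p.Prime) :
    3 * (∑ k ∈ Finset.range p, (k : ℤ) * ((2 * k).choose k : ℤ)) ≡
      2 * ((p : ℤ) - legendre3 p) [ZMOD (p : ℤ) ^ 2] := by
  obtain rfl | hodd := hp.eq_two_or_odd'
  · decide
  have hcentral : (centralBinom p : ℤ) ≡ 2 [ZMOD p ^ 2] := by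
    simpa [centralBinom_eq_two_mul_choose] using
      Int.natCast_modEq_iff.2 (hp.choose_two_mul_add_modEq hp.pos)
  simp only [← centralBinom_eq_two_mul_choose]
  calc 3 * ∑ k ∈ range p, (k : ℤ) * centralBinom k
      = p * centralBinom p - 2 * ∑ k ∈ range p, (centralBinom k : ℤ) := by
        linear_combination three_mul_sum_range_mul_centralBinom_add p
    _ ≡ p * 2 - 2 * legendre3 p [ZMOD p ^ 2] :=
        (hcentral.mul_left _).sub ((hp.sum_range_centralBinom_modEq hodd).mul_left 2)
    _ = 2 * (p - legendre3 p) := by ring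

/-- Since 3 is invertible modulo p², the congruence
`∑ k·C(2k,k) ≡ (2/3)(p − (p/3)) (mod p²)` is stated multiplied through by 3. -/
theorem sum_k_central_binom (p : ℕ) (hp : p.Prime) (hp5 : 5 ≤ p) :
    3 * (∑ k ∈ Finset.range p, (k : ℤ) * ((2 * k).choose k : ℤ)) ≡
      2 * ((p : ℤ) - legendre3 p) [ZMOD (p : ℤ) ^ 2] :=
  sum_k_central_binom_general p hp
end

section
/- For any prime p ≥ 5, ∑_{k=0}^{p-1} C(2k,k)·H_k ≡ −(p/3)·q_p(3) (mod p), where H_k = ∑_{i=1}^k 1/i is the k-th harmonic number computed modulo p and q_p(3) = (3^{p-1} − 1)/p is the Fermat quotient. -/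
/-- The Fermat quotient q_p(a) = (a^(p-1) - 1)/p. -/
def fermatQuotient (p : ℕ) (a : ℤ) : ℤ := (a ^ (p - 1) - 1) / p

/-- The k-th harmonic number computed in ZMod p. -/
def harmonicZMod (p : ℕ) (k : ℕ) : ZMod p := ∑ i ∈ Finset.Icc 1 k, ((i : ZMod p))⁻¹

/-!
Put `m = (p - 1) / 2` and `ε = (p/3)`. Modulo `p`, `C(2k, k)` vanishes for `m < k < p` and equals
`(-4)^k C(m, k)` for `k ≤ m`. The identity
`∑_k C(n, k) H_k x^k = ∑_{j=1}^n ((1 + x)^n - (1 + x)^(n-j)) / j` at `x = -4` turns the sum into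
`∑_{j=1}^m ((-3)^m - (-3)^(m-j)) / j`, and `1 / (m - i) ≡ -2 / (2i + 1) ≡ -2 C(p, 2i + 1) / p`
turns that into `-2 G`, where `p G = ∑_{i<m} C(p, 2i + 1) ((-3)^m - (-3)^i)`. The imaginary parts
of `(1 + √1)^p` and `(1 + √-3)^p` give `p G = 2^(p-1) ((-3)^m - ε)`. Hence `(-3)^m - ε = p t`
for some integer `t`, so the sum is `≡ -2 t`, while `q_p(3) = t ((-3)^m + ε) ≡ 2 ε t`.
-/

open Finset Nat

theorem Finset.sum_range_two_mul {M : Type*} [AddCommMonoid M] (f : ℕ → M) (N : ℕ) :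
    ∑ k ∈ range (2 * N), f k = ∑ i ∈ range N, (f (2 * i) + f (2 * i + 1)) := by
  induction N with
  | zero => simp
  | succ N ih => rw [mul_add_one, sum_range_succ, sum_range_succ, sum_range_succ, ih, add_assoc]

namespace Zsqrtd

theorem im_sum {d : ℤ} {ι : Type*} (s : Finset ι) (f : ι → ℤ√d) :
    (∑ i ∈ s, f i).im = ∑ i ∈ s, (f i).im :=
  map_sum (⟨⟨im, im_zero⟩, im_add⟩ : ℤ√d →+ ℤ) f s

theorem im_one_add_sqrtd_pow (d : ℤ) {n N : ℕ} (hn : n < 2 * N) :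
    ((1 + sqrtd : ℤ√d) ^ n).im = ∑ i ∈ range N, (n.choose (2 * i + 1) : ℤ) * d ^ i := by
  have hsq (i : ℕ) : (sqrtd : ℤ√d) ^ (2 * i) = ((d ^ i : ℤ) : ℤ√d) := by
    rw [pow_mul, sq, dmuld]
    push_cast
    rfl
  rw [add_comm, add_pow, sum_subset (range_subset_range.mpr (by omega : n + 1 ≤ 2 * N)) ?_,
    sum_range_two_mul, im_sum]
  · refine sum_congr rfl fun i _ => ?_
    rw [pow_succ, hsq]
    simp only [one_pow, mul_one, im_add, im_mul, re_mul, re_intCast, im_intCast, re_natCast,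
      im_natCast, re_sqrtd, im_sqrtd]
    ring
  · intro k _ hk
    rw [Nat.choose_eq_zero_of_lt (by simpa using hk)]
    simp

theorem im_one_add_sqrtd_one_pow_succ (n : ℕ) :
    ((1 + sqrtd : ℤ√1) ^ (n + 1)).im = 2 ^ n := by
  have h : (1 + sqrtd : ℤ√1) ^ (n + 1) = ((2 ^ n : ℤ) : ℤ√1) * (1 + sqrtd) := by
    induction n with
    | zero => simp
    | succ n ih =>
      rw [pow_succ, ih]
      ext <;> simp [pow_succ] <;> ring
  rw [h, im_smul]
  simp

theorem im_one_add_sqrtd_neg_three_pow {n : ℕ} (hn : n % 6 = 1 ∨ n % 6 = 5) :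
    ((1 + sqrtd : ℤ√(-3)) ^ n).im = legendre3 n * 2 ^ (n - 1) := by
  have h6 : (1 + sqrtd : ℤ√(-3)) ^ 6 = ((2 ^ 6 : ℤ) : ℤ√(-3)) := by
    ext <;> simp [pow_succ]
  have h5 : (1 + sqrtd : ℤ√(-3)) ^ 5 = ((2 ^ 4 : ℤ) : ℤ√(-3)) * (1 - sqrtd) := by
    ext <;> simp [pow_succ]
  obtain ⟨q, rfl | rfl⟩ : ∃ q, n = 6 * q + 1 ∨ n = 6 * q + 5 := ⟨n / 6, by omega⟩
  · rw [pow_add, pow_mul, h6, ← Int.cast_pow, im_smul, legendre3, if_pos (by omega)]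
    simp [pow_mul]
  · rw [pow_add, pow_mul, h6, h5, ← mul_assoc, ← Int.cast_pow, ← Int.cast_mul, im_smul,
      legendre3, if_neg (by omega), if_pos (by omega)]
    simp [pow_add, pow_mul]

end Zsqrtd

theorem sum_choose_mul_neg_three_pow_sub {m : ℕ}
    (hm : (2 * m + 1) % 6 = 1 ∨ (2 * m + 1) % 6 = 5) :
    ∑ i ∈ range m, ((2 * m + 1).choose (2 * i + 1) : ℤ) * ((-3) ^ m - (-3) ^ i) =
      2 ^ (2 * m) * ((-3) ^ m - legendre3 (2 * m + 1)) := by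
  have h1 := Zsqrtd.im_one_add_sqrtd_pow 1 (n := 2 * m + 1) (N := m + 1) (by omega)
  have h3 := Zsqrtd.im_one_add_sqrtd_pow (-3) (n := 2 * m + 1) (N := m + 1) (by omega)
  rw [Zsqrtd.im_one_add_sqrtd_one_pow_succ, sum_range_succ] at h1
  rw [Zsqrtd.im_one_add_sqrtd_neg_three_pow hm, sum_range_succ, Nat.add_sub_cancel] at h3
  simp only [one_pow, mul_one, choose_self, Nat.cast_one, one_mul] at h1 h3
  simp only [mul_sub, sum_sub_distrib, ← sum_mul]
  linear_combination -(-3) ^ m * h1 + h3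

theorem Nat.Prime.mod_six_eq_one_or_five {p : ℕ} (hp : p.Prime) (hp5 : 5 ≤ p) :
    p % 6 = 1 ∨ p % 6 = 5 := by
  have h2 := hp.eq_one_or_self_of_dvd 2
  have h3 := hp.eq_one_or_self_of_dvd 3
  omega

theorem ZMod.two_pow_card_sub_one_eq_one {p : ℕ} [Fact p.Prime] (hp : 3 ≤ p) :
    (2 : ZMod p) ^ (p - 1) = 1 :=
  pow_card_sub_one_eq_one (Ring.two_ne_zero (by rw [ringChar_zmod_n]; omega))

theorem Nat.Prime.mul_sum_choose_div_mul_neg_three_pow_sub {p m : ℕ} (hp : p.Prime)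
    (hp5 : 5 ≤ p) (hm : 2 * m + 1 = p) :
    (p : ℤ) * ∑ i ∈ range m, ((p.choose (2 * i + 1) / p : ℕ) : ℤ) * ((-3) ^ m - (-3) ^ i)
      = 2 ^ (p - 1) * ((-3) ^ m - legendre3 p) := by
  have h := sum_choose_mul_neg_three_pow_sub (hm ▸ hp.mod_six_eq_one_or_five hp5)
  rw [hm, show 2 * m = p - 1 by omega] at h
  rw [← h, mul_sum]
  refine sum_congr rfl fun i hi => ?_
  have hdvd := hp.dvd_choose_self (k := 2 * i + 1) (by omega) (by simp at hi; omega)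
  rw [← mul_assoc, ← Nat.cast_mul, Nat.mul_div_cancel' hdvd]

-- Euler's criterion for `-3` together with `(-3/p) = (p/3)`, without quadratic reciprocity.
theorem Nat.Prime.dvd_neg_three_pow_sub_legendre3 {p m : ℕ} (hp : p.Prime) (hp5 : 5 ≤ p)
    (hm : 2 * m + 1 = p) : (p : ℤ) ∣ (-3) ^ m - legendre3 p := by
  have := Fact.mk hp
  have h := congrArg (Int.cast : ℤ → ZMod p)
    (hp.mul_sum_choose_div_mul_neg_three_pow_sub hp5 hm)
  push_cast at h
  rw [ZMod.natCast_self, zero_mul, ZMod.two_pow_card_sub_one_eq_one (by omega), one_mul] at h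
  rw [← ZMod.intCast_zmod_eq_zero_iff_dvd]
  push_cast
  exact h.symm

section Field

variable {K : Type*} [Field K]

theorem cast_centralBinom_eq_neg_four_pow_mul_choose {m k : ℕ} (hm : (2 * m + 1 : K) = 0)
    (hk : k ≤ m) (hfact : (k ! : K) ≠ 0) :
    ((2 * k).choose k : K) = (-4) ^ k * m.choose k := by
  induction k with
  | zero => simp
  | succ k ih =>
    have hk1 : (k : K) + 1 ≠ 0 := by
      exact_mod_cast ne_zero_of_dvd_ne_zero hfact
        (Nat.cast_dvd_cast (dvd_factorial k.succ_pos le_rfl))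
    have hcentral : ((k : K) + 1) * (2 * (k + 1)).choose (k + 1) =
        2 * (2 * k + 1) * (2 * k).choose k := by
      have h := congrArg (Nat.cast : ℕ → K) (succ_mul_centralBinom_succ k)
      push_cast [centralBinom] at h
      exact h
    have hchoose : (m.choose (k + 1) : K) * (k + 1) = m.choose k * (m - k : ℕ) := by
      have h := congrArg (Nat.cast : ℕ → K) (choose_succ_right_eq m k)
      push_cast at h
      exact h
    have hmk : (-4 : K) * (m - k : ℕ) = 2 * (2 * k + 1) := by
      rw [Nat.cast_sub (by omega)]
      linear_combination (-2 : K) * hm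
    apply mul_left_cancel₀ hk1
    rw [hcentral, ih (by omega)
      (ne_zero_of_dvd_ne_zero hfact (Nat.cast_dvd_cast (factorial_dvd_factorial k.le_succ)))]
    linear_combination -(-4 : K) ^ (k + 1) * hchoose - (-4 : K) ^ k * m.choose k * hmk

theorem sum_choose_succ_mul_harmonic_mul_pow (x : K) (n : ℕ) (hn : ((n + 1)! : K) ≠ 0) :
    ∑ k ∈ range (n + 2), ((n + 1).choose k : K) * ((∑ i ∈ Icc 1 k, (i : K)⁻¹) * x ^ k) =
      (1 + x) *
          ∑ k ∈ range (n + 1), (n.choose k : K) * ((∑ i ∈ Icc 1 k, (i : K)⁻¹) * x ^ k) +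
        ((1 + x) ^ (n + 1) - 1) * ((n + 1 : ℕ) : K)⁻¹ := by
  have hcast {j : ℕ} (hj : 0 < j) (hjn : j ≤ n + 1) : (j : K) ≠ 0 :=
    ne_zero_of_dvd_ne_zero hn (Nat.cast_dvd_cast (dvd_factorial hj hjn))
  have hsucc : ∀ k ∈ range (n + 1),
      (n.choose k : K) * ((∑ i ∈ Icc 1 (k + 1), (i : K)⁻¹) * x ^ (k + 1)) =
        x * ((n.choose k : K) * ((∑ i ∈ Icc 1 k, (i : K)⁻¹) * x ^ k)) +
          ((n + 1).choose (k + 1) : K) * x ^ (k + 1) * ((n + 1 : ℕ) : K)⁻¹ := by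
    intro k hk
    have hk1 := hcast k.succ_pos (by simp at hk; omega)
    have hn1 := hcast n.succ_pos le_rfl
    have h := congrArg (Nat.cast : ℕ → K) (add_one_mul_choose_eq n k)
    rw [sum_Icc_succ_top (by omega)]
    field_simp
    push_cast at h hk1 hn1 ⊢
    linear_combination x ^ (k + 1) * h
  have hbinom : ∑ k ∈ range (n + 1), ((n + 1).choose (k + 1) : K) * x ^ (k + 1) =
      (1 + x) ^ (n + 1) - 1 := by
    rw [add_comm 1 x, add_pow, sum_range_succ' _ (n + 1)]
    simp [mul_comm]
  rw [sum_choose_succ_mul (fun k _ => (∑ i ∈ Icc 1 k, (i : K)⁻¹) * x ^ k) n,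
    sum_congr rfl hsucc, sum_add_distrib, ← mul_sum, ← sum_mul, hbinom]
  ring

theorem sum_choose_mul_harmonic_mul_pow (x : K) {n : ℕ} (hn : (n ! : K) ≠ 0) :
    ∑ k ∈ range (n + 1), (n.choose k : K) * ((∑ i ∈ Icc 1 k, (i : K)⁻¹) * x ^ k) =
      ∑ j ∈ Icc 1 n, ((1 + x) ^ n - (1 + x) ^ (n - j)) * (j : K)⁻¹ := by
  induction n with
  | zero => simp
  | succ n ih =>
    rw [sum_choose_succ_mul_harmonic_mul_pow x n hn,
      ih (ne_zero_of_dvd_ne_zero hn (Nat.cast_dvd_cast (factorial_dvd_factorial n.le_succ))),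
      sum_Icc_succ_top (by omega), mul_sum, Nat.sub_self, pow_zero]
    congr 1
    refine sum_congr rfl fun j hj => ?_
    rw [show n + 1 - j = n - j + 1 by simp at hj; omega]
    ring

end Field

namespace ZMod

variable {p : ℕ} [hp : Fact p.Prime]

theorem natCast_factorial_ne_zero {n : ℕ} (hn : n < p) : (n ! : ZMod p) ≠ 0 := by
  rw [Ne, natCast_eq_zero_iff, hp.out.dvd_factorial]
  omega

theorem natCast_choose_sub_one {j : ℕ} (hj : j < p) :
    ((p - 1).choose j : ZMod p) = (-1) ^ j := by
  induction j with
  | zero => simp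
  | succ j ih =>
    have hpascal := congrArg (Nat.cast : ℕ → ZMod p) (choose_succ_succ' (p - 1) j)
    rw [Nat.sub_add_cancel hp.out.one_le, (natCast_eq_zero_iff _ _).2
      (hp.out.dvd_choose_self j.succ_ne_zero hj), Nat.cast_add, ih (by omega)] at hpascal
    linear_combination -hpascal

theorem natCast_choose_div_mul {j : ℕ} (hj0 : 0 < j) (hjp : j < p) :
    ((p.choose j / p : ℕ) : ZMod p) * j = (-1) ^ (j - 1) := by
  obtain ⟨c, hc⟩ := hp.out.dvd_choose_self hj0.ne' hjp
  have hpc : p * (p - 1).choose (j - 1) = p * (c * j) := by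
    have h := add_one_mul_choose_eq (p - 1) (j - 1)
    rwa [Nat.sub_add_cancel hp.out.one_le, Nat.sub_add_cancel hj0, hc, mul_assoc] at h
  rw [hc, Nat.mul_div_cancel_left c hp.out.pos, ← natCast_choose_sub_one (by omega),
    Nat.eq_of_mul_eq_mul_left hp.out.pos hpc, Nat.cast_mul]

theorem inv_natCast_sub_eq {m i : ℕ} (hm : 2 * m + 1 = p) (hi : i < m) :
    ((m - i : ℕ) : ZMod p)⁻¹ = -2 * ((p.choose (2 * i + 1) / p : ℕ) : ZMod p) := by
  have hc := natCast_choose_div_mul (p := p) (j := 2 * i + 1) (by omega) (by omega)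
  have hm0 : ((2 * m + 1 : ℕ) : ZMod p) = 0 := by rw [hm, natCast_self]
  rw [Nat.add_sub_cancel, pow_mul, neg_one_sq, one_pow] at hc
  refine inv_eq_of_mul_eq_one_right ?_
  rw [Nat.cast_sub hi.le]
  push_cast at hc hm0
  linear_combination hc - ((p.choose (2 * i + 1) / p : ℕ) : ZMod p) * hm0

theorem sum_Icc_mul_inv_eq {m : ℕ} (hm : 2 * m + 1 = p) (f : ℕ → ZMod p) :
    ∑ j ∈ Icc 1 m, f (m - j) * (j : ZMod p)⁻¹ =
      -2 * ∑ i ∈ range m, ((p.choose (2 * i + 1) / p : ℕ) : ZMod p) * f i := by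
  rw [mul_sum]
  refine sum_nbij' (fun j => m - j) (fun i => m - i) ?_ ?_ ?_ ?_ ?_
  · intro j hj; simp at hj ⊢; omega
  · intro i hi; simp at hi ⊢; omega
  · intro j hj; simp at hj; omega
  · intro i hi; simp at hi; omega
  · intro j hj
    simp only [mem_Icc] at hj
    rw [← mul_assoc, ← inv_natCast_sub_eq hm (by omega), Nat.sub_sub_self hj.2, mul_comm]

theorem sum_range_centralBinom_mul {m : ℕ} (hm : 2 * m + 1 = p) (f : ℕ → ZMod p) :
    ∑ k ∈ range p, ((2 * k).choose k : ZMod p) * f k =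
      ∑ k ∈ range (m + 1), (m.choose k : ZMod p) * (f k * (-4) ^ k) := by
  have hm0 : ((2 * m + 1 : ℕ) : ZMod p) = 0 := by rw [hm, natCast_self]
  rw [← sum_subset (range_subset_range.2 (by omega : m + 1 ≤ p))]
  · refine sum_congr rfl fun k hk => ?_
    rw [mem_range] at hk
    rw [cast_centralBinom_eq_neg_four_pow_mul_choose (by exact_mod_cast hm0) (by omega)
      (natCast_factorial_ne_zero (by omega))]
    ring
  · intro k hk hk'
    simp only [mem_range, not_lt] at hk hk'
    rw [(natCast_eq_zero_iff _ _).2 (hp.out.dvd_choose hk (by omega) (by omega)), zero_mul]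

theorem sum_centralBinom_mul_harmonicZMod {m : ℕ} (hm : 2 * m + 1 = p) :
    ∑ k ∈ range p, ((2 * k).choose k : ZMod p) * harmonicZMod p k =
      -2 * Int.cast
        (∑ i ∈ range m, ((p.choose (2 * i + 1) / p : ℕ) : ℤ) * ((-3) ^ m - (-3) ^ i)) := by
  rw [sum_range_centralBinom_mul hm]
  simp only [harmonicZMod]
  rw [sum_choose_mul_harmonic_mul_pow _ (natCast_factorial_ne_zero (by omega)),
    sum_Icc_mul_inv_eq hm (fun i => ((1 : ZMod p) + -4) ^ m - (1 + -4) ^ i)]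
  simp only [Int.cast_sum, Int.cast_mul, Int.cast_natCast, Int.cast_sub, Int.cast_pow,
    Int.cast_neg, Int.cast_ofNat]
  norm_num

end ZMod

theorem legendre3_sq {p : ℕ} (hp : p % 3 ≠ 0) : legendre3 p ^ 2 = 1 := by
  rcases (by omega : p % 3 = 1 ∨ p % 3 = 2) with h | h <;> simp [legendre3, h]

theorem fermatQuotient_eq_of_eq_mul {p : ℕ} {a c : ℤ} (hp : p ≠ 0)
    (h : a ^ (p - 1) - 1 = p * c) : fermatQuotient p a = c := by
  rw [fermatQuotient, h, Int.mul_ediv_cancel_left _ (by exact_mod_cast hp)]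

theorem sum_central_binom_harmonic (p : ℕ) [Fact p.Prime] (hp5 : 5 ≤ p) :
    ∑ k ∈ Finset.range p, ((2 * k).choose k : ZMod p) * harmonicZMod p k =
      -((legendre3 p : ZMod p) * (fermatQuotient p 3 : ZMod p)) := by
  have hp : p.Prime := Fact.out
  have h6 := hp.mod_six_eq_one_or_five hp5
  obtain ⟨m, hm⟩ : ∃ m, 2 * m + 1 = p := ⟨p / 2, by omega⟩
  have hε := legendre3_sq (p := p) (by omega)
  rw [ZMod.sum_centralBinom_mul_harmonicZMod hm]
  set G : ℤ := ∑ i ∈ range m, ((p.choose (2 * i + 1) / p : ℕ) : ℤ) * ((-3) ^ m - (-3) ^ i)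
  obtain ⟨t, ht⟩ := hp.dvd_neg_three_pow_sub_legendre3 hp5 hm
  have hp0 : (p : ℤ) ≠ 0 := by exact_mod_cast hp.ne_zero
  have hG : G = 2 ^ (p - 1) * t :=
    mul_left_cancel₀ hp0 (by rw [hp.mul_sum_choose_div_mul_neg_three_pow_sub hp5 hm, ht]; ring)
  have hq : fermatQuotient p 3 = t * ((-3) ^ m + legendre3 p) := by
    refine fermatQuotient_eq_of_eq_mul hp.ne_zero ?_
    rw [show p - 1 = m * 2 by omega, ← Even.neg_pow (n := m * 2) ⟨m, by ring⟩, pow_mul,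
      ← mul_assoc, ← ht]
    linear_combination hε
  have h3 : (-3 : ZMod p) ^ m = legendre3 p := by
    have h := congrArg (Int.cast : ℤ → ZMod p) ht
    push_cast [ZMod.natCast_self] at h
    linear_combination h
  rw [hG, hq]
  push_cast
  rw [ZMod.two_pow_card_sub_one_eq_one (by omega), h3]
  have hε' : (legendre3 p : ZMod p) ^ 2 = 1 := by rw [← Int.cast_pow, hε, Int.cast_one]
  linear_combination (2 * t : ZMod p) * hε'
end

section
/- For every nonnegative integer n, ∑_{k=0}^{n} (−4)^k·C(n,k)·H_k = (−3)^n·(H_n − ∑_{k=1}^n 1/(k·(−3)^k)), as an identity of rational numbers. -/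
/-!
With `S_n(x) = ∑ₖ C(n,k) xᵏ Hₖ`, Pascal's rule and `H_{k+1} = H_k + 1/(k+1)` give the recurrence
`S_{n+1}(x) = (1 + x) S_n(x) + ((1 + x)^(n+1) - 1)/(n+1)`, the last term being `∫₀ˣ (1+t)ⁿ dt`.
For `1 + x ≠ 0` the expression `(1 + x)ⁿ (Hₙ - ∑_{k=1}^n 1/(k (1+x)ᵏ))` satisfies the same
recurrence and also vanishes at `n = 0`; the identity is the case `x = -4`.
-/

def harmonicQ (k : ℕ) : ℚ := ∑ i ∈ Finset.Icc 1 k, (1 : ℚ) / i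

open Finset

lemma harmonicQ_succ (n : ℕ) : harmonicQ (n + 1) = harmonicQ n + 1 / (n + 1) := by
  rw [harmonicQ, sum_Icc_succ_top (by omega), ← harmonicQ]
  push_cast
  rfl

lemma sum_range_choose_succ_mul_pow_succ (x : ℚ) (n : ℕ) :
    ∑ k ∈ range (n + 1), ((n + 1).choose (k + 1) : ℚ) * x ^ (k + 1) = (1 + x) ^ (n + 1) - 1 := by
  rw [add_comm 1 x, add_pow, sum_range_succ' _ (n + 1)]
  simp [mul_comm]

lemma sum_range_choose_mul_pow_succ_div (x : ℚ) (n : ℕ) :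
    ∑ k ∈ range (n + 1), (n.choose k : ℚ) * x ^ (k + 1) / (k + 1) =
      ((1 + x) ^ (n + 1) - 1) / (n + 1) := by
  rw [← sum_range_choose_succ_mul_pow_succ, sum_div]
  refine sum_congr rfl fun k _ => ?_
  have h : ((n : ℚ) + 1) * n.choose k = (n + 1).choose (k + 1) * (k + 1) := by
    exact_mod_cast Nat.add_one_mul_choose_eq n k
  field_simp
  linear_combination x ^ (k + 1) * h

lemma sum_range_choose_mul_pow_mul_harmonicQ_succ (x : ℚ) (n : ℕ) :
    ∑ k ∈ range (n + 2), ((n + 1).choose k : ℚ) * x ^ k * harmonicQ k =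
      (1 + x) * ∑ k ∈ range (n + 1), (n.choose k : ℚ) * x ^ k * harmonicQ k +
        ((1 + x) ^ (n + 1) - 1) / (n + 1) := by
  have pascal := sum_choose_succ_mul (fun k _ => x ^ k * harmonicQ k) n
  simp only [← mul_assoc] at pascal
  rw [pascal, add_mul, one_mul, ← sum_range_choose_mul_pow_succ_div, mul_sum]
  simp only [← sum_add_distrib]
  refine sum_congr rfl fun k _ => ?_
  rw [harmonicQ_succ]
  ring

theorem sum_range_choose_mul_pow_mul_harmonicQ (x : ℚ) (hx : 1 + x ≠ 0) (n : ℕ) :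
    ∑ k ∈ range (n + 1), (n.choose k : ℚ) * x ^ k * harmonicQ k =
      (1 + x) ^ n * (harmonicQ n - ∑ k ∈ Icc 1 n, 1 / ((k : ℚ) * (1 + x) ^ k)) := by
  induction n with
  | zero => simp [harmonicQ]
  | succ n ih =>
    rw [sum_range_choose_mul_pow_mul_harmonicQ_succ, ih, harmonicQ_succ,
      sum_Icc_succ_top (by omega)]
    push_cast
    field_simp
    ring

theorem harmonic_identity_1 (n : ℕ) :
    ∑ k ∈ Finset.range (n + 1), (-4 : ℚ) ^ k * (n.choose k : ℚ) * harmonicQ k =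
      (-3 : ℚ) ^ n * (harmonicQ n - ∑ k ∈ Finset.Icc 1 n, 1 / ((k : ℚ) * (-3) ^ k)) := by
  have h := sum_range_choose_mul_pow_mul_harmonicQ (-4) (by norm_num) n
  rw [show (1 : ℚ) + -4 = -3 by norm_num] at h
  simpa only [mul_comm ((n.choose _ : ℚ))] using h
end

section
/- For every nonnegative integer n, ∑_{k=0}^{n} (−4)^k·k·C(n,k)·H_k = (1 − (−3)^n)/3 + (4n·(−3)^n/3)·(H_n − ∑_{k=1}^n 1/(k·(−3)^k)), as an identity of rational numbers. -/
/-!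
Write `F_n(x) = ∑_k C(n,k) x^k H_k`. Pascal's rule and `H_{k+1} = H_k + 1/(k+1)` give the
recurrence `F_{n+1} = (1+x) F_n + ((1+x)^{n+1} - 1)/(n+1)`, the inhomogeneous term being
`∑_k C(n,k) x^{k+1}/(k+1) = ∫₀ˣ (1+t)^n dt`; solving it gives
`F_n = (1+x)^n (H_n - ∑_{k=1}^n 1/(k (1+x)^k))` when `1 + x ≠ 0`. Absorption
`k C(n,k) = n C(n-1,k-1)` and the same recurrence turn the weighted sum into
`((1+x)^n - 1 + n x F_n)/(1+x)`, and the identity is the case `x = -4`.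
-/

open Finset

lemma harmonicQ_eq_harmonic (k : ℕ) : harmonicQ k = harmonic k := by
  simp [harmonicQ, harmonic_eq_sum_Icc]

section BinomialHarmonic

variable {K : Type*} [Field K] [CharZero K]

def binomialHarmonicSum (x : K) (n : ℕ) : K :=
  ∑ k ∈ range (n + 1), x ^ k * (n.choose k : K) * harmonic k

lemma cast_harmonic_succ (k : ℕ) : (harmonic (k + 1) : K) = harmonic k + 1 / ((k : K) + 1) := by
  push_cast [harmonic_succ]
  ring

lemma sum_pow_succ_mul_choose_div_succ (x : K) (m : ℕ) :
    ∑ k ∈ range (m + 1), x ^ (k + 1) * (m.choose k : K) / (k + 1) =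
      ((1 + x) ^ (m + 1) - 1) / (m + 1) := by
  have absorb : ∀ k ∈ range (m + 1),
      x ^ (k + 1) * (m.choose k : K) / (k + 1) * (m + 1) = x ^ (k + 1) * ((m + 1).choose (k + 1) : K) := by
    intro k _
    have h : ((m : K) + 1) * m.choose k = (m + 1).choose (k + 1) * ((k : K) + 1) := by
      exact_mod_cast Nat.add_one_mul_choose_eq m k
    field_simp
    linear_combination x ^ (k + 1) * h
  rw [eq_div_iff (Nat.cast_add_one_ne_zero m), sum_mul, sum_congr rfl absorb, add_comm 1 x,
    add_pow, sum_range_succ' _ (m + 1)]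
  simp

lemma binomialHarmonicSum_succ (x : K) (n : ℕ) :
    binomialHarmonicSum x (n + 1) =
      (1 + x) * binomialHarmonicSum x n + ((1 + x) ^ (n + 1) - 1) / (n + 1) := by
  have pascal := sum_choose_succ_mul (fun i _ => x ^ i * (harmonic i : K)) n
  have shift : ∀ k ∈ range (n + 1), (n.choose k : K) * (x ^ (k + 1) * harmonic (k + 1)) =
      x * (x ^ k * n.choose k * harmonic k) + x ^ (k + 1) * n.choose k / (k + 1) := by
    intro k _
    rw [cast_harmonic_succ]
    ring
  rw [sum_congr rfl shift, sum_add_distrib, ← mul_sum, sum_pow_succ_mul_choose_div_succ] at pascal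
  unfold binomialHarmonicSum
  simp only [mul_comm _ (Nat.choose _ _ : K), mul_assoc] at pascal ⊢
  linear_combination pascal

theorem binomialHarmonicSum_eq (x : K) (hx : 1 + x ≠ 0) (n : ℕ) :
    binomialHarmonicSum x n =
      (1 + x) ^ n * (harmonic n - ∑ k ∈ Icc 1 n, 1 / ((k : K) * (1 + x) ^ k)) := by
  induction n with
  | zero => simp [binomialHarmonicSum]
  | succ n ih =>
    rw [binomialHarmonicSum_succ, ih, sum_Icc_succ_top (by omega), cast_harmonic_succ]
    have := Nat.cast_add_one_ne_zero (R := K) n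
    push_cast
    field_simp
    ring

lemma sum_pow_mul_mul_choose_mul_harmonic (x : K) (n : ℕ) :
    (1 + x) * ∑ k ∈ range (n + 1), x ^ k * k * (n.choose k : K) * harmonic k =
      n * x * binomialHarmonicSum x n + (1 + x) ^ n - 1 := by
  cases n with
  | zero => simp [binomialHarmonicSum]
  | succ m =>
    have absorb : ∑ k ∈ range (m + 2), x ^ k * k * ((m + 1).choose k : K) * harmonic k =
        (m + 1) * (x * binomialHarmonicSum x m + ((1 + x) ^ (m + 1) - 1) / (m + 1)) := by
      rw [sum_range_succ', ← sum_pow_succ_mul_choose_div_succ, binomialHarmonicSum, mul_sum,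
        ← sum_add_distrib, mul_sum]
      simp only [CharP.cast_eq_zero, mul_zero, zero_mul, add_zero]
      refine sum_congr rfl fun k _ => ?_
      have h : ((m : K) + 1) * m.choose k = (m + 1).choose (k + 1) * ((k : K) + 1) := by
        exact_mod_cast Nat.add_one_mul_choose_eq m k
      rw [cast_harmonic_succ]
      push_cast
      field_simp
      linear_combination (-x ^ (k + 1) * (harmonic k * ((k : K) + 1) + 1)) * h
    rw [absorb, binomialHarmonicSum_succ]
    have := Nat.cast_add_one_ne_zero (R := K) m
    push_cast
    field_simp
    ring

end BinomialHarmonic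

theorem harmonic_identity_2 (n : ℕ) :
    ∑ k ∈ Finset.range (n + 1), (-4 : ℚ) ^ k * (k : ℚ) * (n.choose k : ℚ) * harmonicQ k =
      (1 - (-3 : ℚ) ^ n) / 3 +
        4 * (n : ℚ) * (-3 : ℚ) ^ n / 3 *
          (harmonicQ n - ∑ k ∈ Finset.Icc 1 n, 1 / ((k : ℚ) * (-3) ^ k)) := by
  have weighted := sum_pow_mul_mul_choose_mul_harmonic (-4 : ℚ) n
  have closed := binomialHarmonicSum_eq (-4 : ℚ) (by norm_num) n
  simp only [show (1 : ℚ) + -4 = -3 by norm_num] at weighted closed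
  simp only [harmonicQ_eq_harmonic]
  linear_combination (-1 / 3 : ℚ) * weighted + (4 * n / 3 : ℚ) * closed
end

section
/- For any prime p ≥ 5, ∑_{k=1}^{(p-1)/2} (−3)^k/k + 3·∑_{k=1}^{(p-1)/2} 1/(k·(−3)^k) ≡ 3·q_p(3) − 8·q_p(2) (mod p), where sums are computed in the field of p elements. -/
theorem aux_reindex (p : ℕ) [hp : Fact p.Prime] (hp5 : 5 ≤ p) :
    (∑ k ∈ Finset.Icc 1 ((p - 1) / 2), (-3 : ZMod p) ^ k / (k : ZMod p)) +
      3 * ∑ k ∈ Finset.Icc 1 ((p - 1) / 2), 1 / ((k : ZMod p) * (-3 : ZMod p) ^ k) =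
      ∑ k ∈ Finset.Icc 1 (p - 1), (-3 : ZMod p) ^ k / (k : ZMod p) := by
  have hodd : p % 2 = 1 := Nat.odd_iff.mp (hp.out.odd_of_ne_two (by omega))
  set m := (p - 1) / 2 with hm
  have h2m : p = 2 * m + 1 := by omega
  have h3ne : (-3 : ZMod p) ≠ 0 := by
    intro h
    have : ((3 : ℕ) : ZMod p) = 0 := by push_cast; linear_combination -h
    rw [ZMod.natCast_eq_zero_iff] at this
    have := Nat.le_of_dvd (by norm_num) this
    omega
  have key : ∑ k ∈ Finset.Ioc m (p-1), (-3 : ZMod p) ^ k / (k : ZMod p)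
      = ∑ j ∈ Finset.Icc 1 m, 3 * (1 / ((j : ZMod p) * (-3 : ZMod p) ^ j)) := by
    refine Finset.sum_nbij' (fun k => p - k) (fun j => p - j) ?_ ?_ ?_ ?_ ?_
    · intro k hk; simp only [Finset.mem_Ioc, Finset.mem_Icc] at *; omega
    · intro j hj; simp only [Finset.mem_Ioc, Finset.mem_Icc] at *; omega
    · intro k hk; simp only [Finset.mem_Ioc] at hk; show p - (p - k) = k; omega
    · intro j hj; simp only [Finset.mem_Icc] at hj; show p - (p - j) = j; omega
    · intro k hk
      simp only [Finset.mem_Ioc] at hk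
      show (-3 : ZMod p) ^ k / (k : ZMod p)
          = 3 * (1 / (((p - k : ℕ) : ZMod p) * (-3 : ZMod p) ^ (p - k)))
      have hcast : ((p - k : ℕ) : ZMod p) = -(k : ZMod p) := by
        push_cast [Nat.cast_sub (by omega : k ≤ p)]
        simp
      have hkne' : (k : ZMod p) ≠ 0 := by
        rw [Ne, ZMod.natCast_eq_zero_iff]
        intro h
        have := Nat.le_of_dvd (by omega) h
        omega
      have hupow : (-3 : ZMod p) ^ (p - k) * (-3 : ZMod p) ^ k = -3 := by
        rw [← pow_add, Nat.sub_add_cancel (by omega : k ≤ p), ZMod.pow_card]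
      have hune : (-3 : ZMod p) ^ k ≠ 0 := pow_ne_zero _ h3ne
      have hune2 : (-3 : ZMod p) ^ (p - k) ≠ 0 := pow_ne_zero _ h3ne
      rw [hcast]
      field_simp
      linear_combination hupow
  rw [show Finset.Icc 1 (p-1) = Finset.Ioc 0 (p-1) from (Finset.Icc_add_one_left_eq_Ioc 0 (p-1)),
      show Finset.Icc 1 m = Finset.Ioc 0 m from (Finset.Icc_add_one_left_eq_Ioc 0 m)] at *
  rw [← Finset.Ioc_union_Ioc_eq_Ioc (Nat.zero_le m) (by omega : m ≤ p - 1),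
      Finset.sum_union (by
        rw [Finset.disjoint_left]
        intro a ha hb
        simp only [Finset.mem_Ioc] at ha hb
        omega), key, Finset.mul_sum]

theorem aux_fullsum (p : ℕ) [hp : Fact p.Prime] (hp5 : 5 ≤ p) :
    ∑ k ∈ Finset.Icc 1 (p - 1), (-3 : ZMod p) ^ k / (k : ZMod p) =
      3 * (fermatQuotient p 3 : ZMod p) - 8 * (fermatQuotient p 2 : ZMod p) := by
  have hp1 : 1 < p := hp.out.one_lt
  have h2ne : (2 : ZMod p) ≠ 0 := by
    have : ((2:ℕ) : ZMod p) ≠ 0 := by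
      rw [Ne, ZMod.natCast_eq_zero_iff]
      intro h; have := Nat.le_of_dvd (by norm_num) h; omega
    simpa using this
  have h3ne : (3 : ZMod p) ≠ 0 := by
    have : ((3:ℕ) : ZMod p) ≠ 0 := by
      rw [Ne, ZMod.natCast_eq_zero_iff]
      intro h; have := Nat.le_of_dvd (by norm_num) h; omega
    simpa using this
  have hd2 : (p : ℤ) ∣ 2 ^ (p-1) - 1 := by
    rw [← ZMod.intCast_zmod_eq_zero_iff_dvd]
    push_cast
    rw [ZMod.pow_card_sub_one_eq_one h2ne]; ring
  have hd3 : (p : ℤ) ∣ 3 ^ (p-1) - 1 := by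
    rw [← ZMod.intCast_zmod_eq_zero_iff_dvd]
    push_cast
    rw [ZMod.pow_card_sub_one_eq_one h3ne]; ring
  have hq2 : (p : ℤ) * fermatQuotient p 2 = 2 ^ (p-1) - 1 := Int.mul_ediv_cancel' hd2
  have hq3 : (p : ℤ) * fermatQuotient p 3 = 3 ^ (p-1) - 1 := Int.mul_ediv_cancel' hd3
  set N : ℕ := ∑ k ∈ Finset.Icc 1 (p-1), (Nat.choose p k / p) * 3 ^ k with hN
  have hpc : ∀ k ∈ Finset.Icc 1 (p-1), p * (Nat.choose p k / p) = Nat.choose p k := by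
    intro k hk
    simp only [Finset.mem_Icc] at hk
    exact Nat.mul_div_cancel' (hp.out.dvd_choose_self (by omega) (by omega))
  have hNZ : (N : ℤ) = ∑ k ∈ Finset.Icc 1 (p-1), ((Nat.choose p k / p : ℕ) : ℤ) * 3 ^ k := by
    rw [hN, Nat.cast_sum]
    apply Finset.sum_congr rfl
    intro k _
    push_cast [Nat.cast_mul, Nat.cast_pow]
    ring
  have hpN : (p : ℤ) * N = 4 ^ p - 1 - 3 ^ p := by
    have hbin : (4 : ℤ) ^ p = ∑ k ∈ Finset.range (p+1), 3 ^ k * Nat.choose p k := by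
      have := add_pow (3 : ℤ) 1 p
      simpa using this
    have hsplit : Finset.range (p+1) = insert 0 (insert p (Finset.Icc 1 (p-1))) := by
      ext a
      simp only [Finset.mem_range, Finset.mem_insert, Finset.mem_Icc]
      omega
    rw [hsplit, Finset.sum_insert (by simp; omega), Finset.sum_insert (by simp; omega)] at hbin
    simp only [pow_zero, Nat.choose_zero_right, Nat.choose_self, Nat.cast_one, mul_one,
      one_mul] at hbin
    have heq : (4:ℤ)^p - 1 - 3^p = ∑ k ∈ Finset.Icc 1 (p-1), 3 ^ k * (Nat.choose p k : ℤ) := by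
      rw [hbin]; push_cast; ring
    rw [heq, hNZ, Finset.mul_sum]
    apply Finset.sum_congr rfl
    intro k hk
    have h1 := hpc k hk
    have h2 : ((p : ℤ)) * ((Nat.choose p k / p : ℕ) : ℤ) = (Nat.choose p k : ℤ) := by
      exact_mod_cast congrArg (Nat.cast : ℕ → ℤ) h1
    linear_combination (3:ℤ)^k * h2
  have choose_cast : ∀ k, k ≤ p - 1 → ((Nat.choose (p - 1) k : ZMod p)) = (-1) ^ k := by
    intro k
    induction k with
    | zero => simp
    | succ k ih =>
      intro hk
      have hpas : Nat.choose p (k+1) = Nat.choose (p-1) k + Nat.choose (p-1) (k+1) := by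
        conv_lhs => rw [show p = (p-1)+1 by omega]
        rw [Nat.choose_succ_succ']
      have h0 : ((Nat.choose p (k+1) : ZMod p)) = 0 :=
        (ZMod.natCast_eq_zero_iff _ _).mpr (hp.out.dvd_choose_self (by omega) (by omega))
      have := ih (by omega)
      rw [hpas] at h0
      push_cast at h0
      rw [this] at h0
      rw [pow_succ]
      linear_combination h0
  have hNmod : (N : ZMod p) = - ∑ k ∈ Finset.Icc 1 (p - 1), (-3 : ZMod p) ^ k / (k : ZMod p) := by
    have hNZM : (N : ZMod p) = ∑ k ∈ Finset.Icc 1 (p-1),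
        ((Nat.choose p k / p : ℕ) : ZMod p) * 3 ^ k := by
      rw [hN, Nat.cast_sum]
      apply Finset.sum_congr rfl
      intro k _
      push_cast [Nat.cast_mul, Nat.cast_pow]
      ring
    rw [hNZM, ← Finset.sum_neg_distrib]
    apply Finset.sum_congr rfl
    intro k hk
    simp only [Finset.mem_Icc] at hk
    have hkne : (k : ZMod p) ≠ 0 := by
      rw [Ne, ZMod.natCast_eq_zero_iff]
      intro h; have := Nat.le_of_dvd (by omega) h; omega
    have hkc : k * (Nat.choose p k / p) = Nat.choose (p-1) (k-1) := by
      have h1 : p * Nat.choose (p-1) (k-1) = Nat.choose p k * k := by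
        have := Nat.add_one_mul_choose_eq (p-1) (k-1)
        rw [show p-1+1 = p by omega, show k-1+1 = k by omega] at this
        exact this
      have h2 : p * (k * (Nat.choose p k / p)) = p * Nat.choose (p-1) (k-1) := by
        calc p * (k * (Nat.choose p k / p)) = k * (p * (Nat.choose p k / p)) := by ring
          _ = k * Nat.choose p k := by rw [hpc k (by simp only [Finset.mem_Icc]; omega)]
          _ = p * Nat.choose (p-1) (k-1) := by rw [h1, Nat.mul_comm]
      exact Nat.eq_of_mul_eq_mul_left (by omega) h2
    have hcc : (k : ZMod p) * ((Nat.choose p k / p : ℕ) : ZMod p) = (-1) ^ (k-1) := by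
      have h3 := congrArg (Nat.cast : ℕ → ZMod p) hkc
      push_cast at h3
      rw [h3, choose_cast (k-1) (by omega)]
    have hpow : (-3 : ZMod p) ^ k = -((-1 : ZMod p) ^ (k-1) * 3 ^ k) := by
      obtain ⟨j, hj⟩ : ∃ j, k = j + 1 := ⟨k-1, by omega⟩
      subst hj
      simp only [Nat.add_sub_cancel]
      rw [show (-3 : ZMod p) = (-1) * 3 by ring, mul_pow, pow_succ ((-1 : ZMod p)) j]
      ring
    field_simp
    linear_combination (3 : ZMod p)^k * hcc + hpow
  have h4 : (4:ℤ)^p = 4 * ((2:ℤ)^(p-1))^2 := by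
    conv_lhs => rw [show p = (p-1)+1 by omega]
    rw [pow_succ, show (4:ℤ) = 2^2 by norm_num, ← pow_mul, two_mul, pow_add]
    ring
  have h3p : (3:ℤ)^p = 3 * (3:ℤ)^(p-1) := by
    conv_lhs => rw [show p = (p-1)+1 by omega]
    rw [pow_succ]; ring
  have hNint : (N : ℤ) = 4 * p * (fermatQuotient p 2)^2 + 8 * fermatQuotient p 2
      - 3 * fermatQuotient p 3 := by
    have hpne : (p : ℤ) ≠ 0 := by exact_mod_cast (by omega : p ≠ 0)
    apply mul_left_cancel₀ hpne
    rw [hpN, h4, h3p]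
    have ha : (2:ℤ)^(p-1) = p * fermatQuotient p 2 + 1 := by linarith
    have hb : (3:ℤ)^(p-1) = p * fermatQuotient p 3 + 1 := by linarith
    rw [ha, hb]; ring
  have hfin : ((N : ℕ) : ZMod p) = 8 * (fermatQuotient p 2 : ZMod p)
      - 3 * (fermatQuotient p 3 : ZMod p) := by
    have h5 := congrArg (Int.cast : ℤ → ZMod p) hNint
    push_cast at h5
    rw [ZMod.natCast_self] at h5
    rw [h5]; ring
  rw [hfin] at hNmod
  linear_combination hNmod

theorem sum_pow_neg_three (p : ℕ) [Fact p.Prime] (hp5 : 5 ≤ p) :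
    (∑ k ∈ Finset.Icc 1 ((p - 1) / 2), (-3 : ZMod p) ^ k / (k : ZMod p)) +
      3 * ∑ k ∈ Finset.Icc 1 ((p - 1) / 2), 1 / ((k : ZMod p) * (-3 : ZMod p) ^ k) =
      3 * (fermatQuotient p 3 : ZMod p) - 8 * (fermatQuotient p 2 : ZMod p) := by
  rw [aux_reindex p hp5, aux_fullsum p hp5]
end

section
/- Let p ≥ 5 be prime. For every k with 1 ≤ k ≤ p, ∑_{i=0}^{p-1} C(2i, i+k) ≡ ((p−k)/3) (mod p), where ((p−k)/3) denotes the Legendre-symbol-like value which is 1, −1, or 0 according as p−k ≡ 1, 2, or 0 (mod 3). -/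
/-!
Write `S k = ∑_{i<p} C(2i, i+k)`. Applying Pascal's rule twice, `C(2i+2, i+1+(k+1))` equals
`C(2i, i+k) + 2 C(2i, i+k+1) + C(2i, i+k+2)`, so the sum telescopes to
`S k + S (k+1) + S (k+2) = C(2p, p+k+1)`, which vanishes mod `p` by Lucas' theorem as long as
`k + 2 ≤ p`. Hence `S k` mod `p` satisfies the same three-term recurrence as `chi3 (p - k)`, and
the two agree for `k ≥ p` (both `0`) and `k = p - 1` (both `1`).
-/

/-- The value which is 1, −1, or 0 according as m ≡ 1, 2, or 0 (mod 3). -/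
def chi3 (m : ℕ) : ℤ :=
  if m % 3 = 1 then 1 else if m % 3 = 2 then -1 else 0

open Finset

theorem Nat.choose_add_two_add_two (n j : ℕ) :
    (n + 2).choose (j + 2) = n.choose j + 2 * n.choose (j + 1) + n.choose (j + 2) := by
  rw [Nat.choose_succ_succ' (n + 1), Nat.choose_succ_succ', Nat.choose_succ_succ' n (j + 1)]
  ring

theorem Nat.Prime.dvd_choose_mul_of_not_dvd {p : ℕ} (hp : p.Prime) (m : ℕ) {j : ℕ}
    (hj : ¬p ∣ j) : p ∣ (p * m).choose j := by
  have := Fact.mk hp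
  have hlucas := Choose.choose_modEq_choose_mod_mul_choose_div_nat (n := p * m) (k := j) (p := p)
  have hj0 : 0 < j % p := Nat.pos_of_ne_zero fun h => hj (Nat.dvd_of_mod_eq_zero h)
  rw [Nat.mul_mod_right, Nat.choose_eq_zero_of_lt hj0, zero_mul] at hlucas
  exact Nat.dvd_of_mod_eq_zero hlucas

def shiftedCentralBinomSum (n k : ℕ) : ℕ :=
  ∑ i ∈ range n, (2 * i).choose (i + k)

theorem shiftedCentralBinomSum_succ (n k : ℕ) :
    shiftedCentralBinomSum (n + 1) k = shiftedCentralBinomSum n k + (2 * n).choose (n + k) :=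
  sum_range_succ _ n

theorem shiftedCentralBinomSum_eq_zero_of_le {n k : ℕ} (h : n ≤ k) :
    shiftedCentralBinomSum n k = 0 :=
  sum_eq_zero fun i hi => Nat.choose_eq_zero_of_lt (by simp at hi; omega)

theorem shiftedCentralBinomSum_succ_self (n : ℕ) : shiftedCentralBinomSum (n + 1) n = 1 := by
  rw [shiftedCentralBinomSum_succ, shiftedCentralBinomSum_eq_zero_of_le le_rfl, two_mul,
    Nat.choose_self]

theorem shiftedCentralBinomSum_add_add (n k : ℕ) :
    shiftedCentralBinomSum n k + shiftedCentralBinomSum n (k + 1) +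
      shiftedCentralBinomSum n (k + 2) = (2 * n).choose (n + k + 1) := by
  have hpascal : shiftedCentralBinomSum n k + 2 * shiftedCentralBinomSum n (k + 1) +
      shiftedCentralBinomSum n (k + 2) = shiftedCentralBinomSum (n + 1) (k + 1) := by
    simp only [shiftedCentralBinomSum, mul_sum, ← sum_add_distrib]
    rw [sum_range_succ' _ n, Nat.choose_eq_zero_of_lt (by omega), add_zero]
    refine sum_congr rfl fun i _ => ?_
    rw [show 2 * (i + 1) = 2 * i + 2 by ring, show i + 1 + (k + 1) = i + k + 2 by ring,
      Nat.choose_add_two_add_two]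
    ring_nf
  rw [shiftedCentralBinomSum_succ, ← add_assoc] at hpascal
  omega

theorem chi3_add_add (m : ℕ) : chi3 m + chi3 (m + 1) + chi3 (m + 2) = 0 := by
  have : m % 3 = 0 ∨ m % 3 = 1 ∨ m % 3 = 2 := by omega
  rcases this with h | h | h <;> simp [chi3, Nat.add_mod, h]

theorem natCast_shiftedCentralBinomSum_eq_chi3 {p : ℕ} [hp : Fact p.Prime] (k : ℕ) :
    (shiftedCentralBinomSum p k : ZMod p) = chi3 (p - k) := by
  suffices h : ∀ d k, k + d = p → (shiftedCentralBinomSum p k : ZMod p) = chi3 d by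
    rcases le_total p k with hpk | hkp
    · simp [shiftedCentralBinomSum_eq_zero_of_le hpk, Nat.sub_eq_zero_of_le hpk, chi3]
    · exact h (p - k) k (by omega)
  intro d
  induction d using Nat.twoStepInduction with
  | zero => rintro k rfl; simp [shiftedCentralBinomSum_eq_zero_of_le, chi3]
  | one => rintro k rfl; simp [shiftedCentralBinomSum_succ_self, chi3]
  | more d ih₀ ih₁ =>
    intro k hkd
    have hvanish : ((2 * p).choose (p + k + 1) : ZMod p) = 0 := by
      rw [ZMod.natCast_eq_zero_iff, mul_comm, add_assoc]
      exact hp.out.dvd_choose_mul_of_not_dvd 2 <|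
        (Nat.dvd_add_right dvd_rfl).not.mpr (Nat.not_dvd_of_pos_of_lt (by omega) (by omega))
    have hrec := congrArg (Nat.cast : ℕ → ZMod p) (shiftedCentralBinomSum_add_add p k)
    push_cast at hrec
    rw [hvanish, ih₁ (k + 1) (by omega), ih₀ (k + 2) (by omega)] at hrec
    have hchi := congrArg (Int.cast : ℤ → ZMod p) (chi3_add_add d)
    push_cast at hchi
    linear_combination hrec - hchi

theorem sum_binom_shift_general (p : ℕ) (hp : p.Prime) (k : ℕ) :
    (∑ i ∈ Finset.range p, ((2 * i).choose (i + k) : ℤ)) ≡ chi3 (p - k) [ZMOD (p : ℤ)] := by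
  have := Fact.mk hp
  rw [← ZMod.intCast_eq_intCast_iff]
  have h := natCast_shiftedCentralBinomSum_eq_chi3 (p := p) k
  push_cast [shiftedCentralBinomSum] at h ⊢
  exact h

theorem sum_binom_shift (p : ℕ) (hp : p.Prime) (hp5 : 5 ≤ p)
    (k : ℕ) (hk1 : 1 ≤ k) (hkp : k ≤ p) :
    (∑ i ∈ Finset.range p, ((2 * i).choose (i + k) : ℤ)) ≡ chi3 (p - k) [ZMOD (p : ℤ)] :=
  sum_binom_shift_general p hp k
end

section
/- For all nonnegative integers i and j, ∑_{k=-min(i,j)}^{min(i,j)} (−1)^k·C(2i, i+k)·C(2j, j+k) = C(2i,i)·C(2j,j)/C(i+j, i) (Von Szily's identity); in particular S(i,j) := C(2i,i)·C(2j,j)/C(i+j,i) is an integer. -/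
/-!
Reindexing by `a = i + k`, the alternating sum is `U i j = (-1)^i T i j`, where `T i j` is the
coefficient of `X^(i+j)` in `(X - 1)^(2i) (X + 1)^(2j)`. Since `(X + 1)^2 - (X - 1)^2 = 4X`,
`U (i+1) j = 4 U i j - U i (j+1)`, and `C(2i,i) C(2j,j) / C(i+j,i)` satisfies the same recurrence,
as the ratios of consecutive binomial coefficients show. Both equal `C(2j,j)` at `i = 0`, so
induction on `i` gives the identity `C(i+j,i) U i j = C(2i,i) C(2j,j)` in `ℤ`, whence
divisibility.
-/

open Polynomial Finset

noncomputable def szilyCoeff (i j : ℕ) : ℤ :=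
  ((X + C (-1)) ^ (2 * i) * (X + 1) ^ (2 * j)).coeff (i + j)

theorem szilyCoeff_zero_left (j : ℕ) : szilyCoeff 0 j = (2 * j).choose j := by
  simp [szilyCoeff, coeff_X_add_one_pow]

theorem szilyCoeff_succ_left (i j : ℕ) :
    szilyCoeff (i + 1) j = szilyCoeff i (j + 1) - 4 * szilyCoeff i j := by
  have key : (X + C (-1) : ℤ[X]) ^ (2 * (i + 1)) * (X + 1) ^ (2 * j) =
      (X + C (-1)) ^ (2 * i) * (X + 1) ^ (2 * (j + 1)) -
        C 4 * ((X + C (-1)) ^ (2 * i) * (X + 1) ^ (2 * j) * X) := by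
    simp only [C_neg, C_1, C_ofNat]
    ring
  rw [szilyCoeff, show i + 1 + j = i + j + 1 by ring, key, coeff_sub, coeff_C_mul, coeff_mul_X,
    szilyCoeff, szilyCoeff, show i + (j + 1) = i + j + 1 by ring]

theorem choose_add_mul_szilyCoeff (i j : ℕ) :
    ((i + j).choose i * ((-1) ^ i * szilyCoeff i j) : ℤ) =
      i.centralBinom * j.centralBinom := by
  induction i generalizing j with
  | zero => simp [szilyCoeff_zero_left, Nat.centralBinom_eq_two_mul_choose]
  | succ i ih =>
    have hB : ((i + 1) * (i + 1 + j).choose (i + 1) : ℤ) =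
        (i + j + 1) * (i + j).choose i := by
      rw [show i + 1 + j = i + j + 1 by ring]
      exact_mod_cast by linarith [Nat.add_one_mul_choose_eq (i + j) i]
    have hA : ((i + 1) * (i + 1 + j).choose (i + 1) : ℤ) =
        (j + 1) * (i + (j + 1)).choose i := by
      have h := Nat.choose_succ_right_eq (i + j + 1) i
      rw [show i + j + 1 - i = j + 1 by omega] at h
      rw [show i + 1 + j = i + j + 1 by ring, show i + (j + 1) = i + j + 1 by ring]
      exact_mod_cast by linarith [h]
    have hCi : ((i + 1) * (i + 1).centralBinom : ℤ) = 2 * (2 * i + 1) * i.centralBinom := by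
      exact_mod_cast Nat.succ_mul_centralBinom_succ i
    have hCj : ((j + 1) * (j + 1).centralBinom : ℤ) = 2 * (2 * j + 1) * j.centralBinom := by
      exact_mod_cast Nat.succ_mul_centralBinom_succ j
    refine mul_left_cancel₀ (by positivity : ((i + 1) * (j + 1) : ℤ) ≠ 0) ?_
    rw [szilyCoeff_succ_left]
    linear_combination 4 * (j + 1 : ℤ) * ((-1) ^ i * szilyCoeff i j) * hB
      - (j + 1 : ℤ) * ((-1) ^ i * szilyCoeff i (j + 1)) * hA
      + 4 * (j + 1 : ℤ) * (i + j + 1) * ih j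
      - (j + 1 : ℤ) ^ 2 * ih (j + 1) - (j + 1 : ℤ) * i.centralBinom * hCj
      - (j + 1 : ℤ) * j.centralBinom * hCi

theorem szilyCoeff_eq_sum_range (i j : ℕ) : szilyCoeff i j =
    ∑ a ∈ range (i + j + 1),
      (-1) ^ (2 * i - a) * ((2 * i).choose a * (2 * j).choose (i + j - a) : ℤ) := by
  rw [szilyCoeff, coeff_mul, Nat.sum_antidiagonal_eq_sum_range_succ_mk]
  refine sum_congr rfl fun a _ => ?_
  rw [coeff_X_add_C_pow, coeff_X_add_one_pow]
  ring

theorem szilyCoeff_eq_sum_Icc (i j : ℕ) : szilyCoeff i j =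
    ∑ a ∈ Icc (i - min i j) (i + min i j),
      (-1) ^ (2 * i - a) * ((2 * i).choose a * (2 * j).choose (i + j - a) : ℤ) := by
  rw [szilyCoeff_eq_sum_range]
  refine (sum_subset (fun a ha => ?_) fun a ha hna => ?_).symm
  · simp only [mem_Icc, mem_range] at ha ⊢
    omega
  · simp only [mem_Icc, mem_range, not_and_or, not_le] at ha hna
    rcases (by omega : 2 * i < a ∨ 2 * j < i + j - a) with h | h <;>
      simp [Nat.choose_eq_zero_of_lt h]

theorem sum_Icc_eq_neg_one_pow_mul_szilyCoeff (i j : ℕ) :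
    (∑ k ∈ Icc (-(min i j : ℤ)) (min i j : ℤ),
        (-1) ^ k.toNat * (-1) ^ (-k).toNat *
          ((2 * i).choose ((i : ℤ) + k).toNat : ℤ) *
            ((2 * j).choose ((j : ℤ) + k).toNat : ℤ)) =
      (-1) ^ i * szilyCoeff i j := by
  rw [szilyCoeff_eq_sum_Icc, mul_sum]
  refine sum_nbij' (fun k => ((i : ℤ) + k).toNat) (fun a => (a : ℤ) - i)
    (by simp only [mem_Icc]; omega) (by simp only [mem_Icc]; omega)
    (by simp only [mem_Icc]; omega) (by simp only [mem_Icc]; omega) fun k hk => ?_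
  simp only [mem_Icc] at hk
  have hsign : (-1 : ℤ) ^ k.toNat * (-1) ^ (-k).toNat =
      (-1) ^ i * (-1) ^ (2 * i - ((i : ℤ) + k).toNat) := by
    rw [← pow_add, ← pow_add]
    exact neg_one_pow_congr (by simp only [Nat.even_iff]; omega)
  have hsymm : (2 * j).choose ((j : ℤ) + k).toNat =
      (2 * j).choose (i + j - ((i : ℤ) + k).toNat) := by
    rw [← Nat.choose_symm (by omega : ((j : ℤ) + k).toNat ≤ 2 * j)]
    congr 1
    omega
  rw [hsign, hsymm]
  ring

/-- Von Szily's identity: ∑_{k=-min(i,j)}^{min(i,j)} (−1)^k C(2i,i+k) C(2j,j+k)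
equals C(2i,i)·C(2j,j)/C(i+j,i); in particular the quotient is an integer. -/
theorem von_szily (i j : ℕ) :
    ((i + j).choose i : ℤ) ∣ ((2 * i).choose i : ℤ) * ((2 * j).choose j : ℤ) ∧
    (∑ k ∈ Finset.Icc (-(min i j : ℤ)) (min i j : ℤ),
        (-1) ^ k.toNat * (-1) ^ (-k).toNat *
          ((2 * i).choose ((i : ℤ) + k).toNat : ℤ) * ((2 * j).choose ((j : ℤ) + k).toNat : ℤ)) =
      ((2 * i).choose i : ℤ) * ((2 * j).choose j : ℤ) / ((i + j).choose i : ℤ) := by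
  have key := choose_add_mul_szilyCoeff i j
  simp only [Nat.centralBinom_eq_two_mul_choose] at key
  have hc : ((i + j).choose i : ℤ) ≠ 0 := by
    exact_mod_cast (Nat.choose_pos (Nat.le_add_right i j)).ne'
  refine ⟨⟨_, key.symm⟩, ?_⟩
  rw [sum_Icc_eq_neg_one_pow_mul_szilyCoeff, ← key, Int.mul_ediv_cancel_left _ hc]
end

section
/- For all nonnegative integers i, j and any rational x not a nonpositive integer, ∑_{k=0}^{i+j} ((−1)^{i+j+k}/(x+k))·C(k,j)·C(j,k−i) = (x)_i·(x)_j/(x)_{i+j+1}, where (x)_m = x(x+1)⋯(x+m−1) is the Pochhammer symbol and C(j, k−i) = 0 if k < i. -/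
/-!
Write `S i` for the left-hand side. Pascal's rule, in the weighted form
`(x + k) C(j+1, k-i) = (x+i+j+1) C(j, k-i-1) + (x+i) C(j, k-i)`, turns
`(x+i+j+1) S (i+1) - (x+i) S i` into `± ∑ₜ (-1)ᵗ C(j+1, t) C(i+t, j)`, the `(j+1)`-st forward
difference of the degree-`j` polynomial `t ↦ C(i+t, j)`, which vanishes. So `S` satisfies the same
first-order recurrence in `i` as the right-hand side, and both equal `1 / (x + j)` at `i = 0`.
-/

open Finset Function fwdDiff

/-- The Pochhammer symbol (x)_m = x(x+1)⋯(x+m−1). -/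
def pochQ (x : ℚ) (m : ℕ) : ℚ := ∏ l ∈ Finset.range m, (x + l)

lemma pochQ_succ (x : ℚ) (n : ℕ) : pochQ x (n + 1) = pochQ x n * (x + n) :=
  prod_range_succ _ _

lemma pochQ_ne_zero {x : ℚ} (hx : ∀ k : ℕ, x + k ≠ 0) (n : ℕ) : pochQ x n ≠ 0 :=
  prod_ne_zero_iff.2 fun k _ ↦ hx k

lemma fwdDiff_iter_choose_eq_zero_of_lt {m n : ℕ} (h : m < n) :
    (Δ_[1])^[n] (fun x ↦ x.choose m : ℕ → ℤ) = 0 := by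
  obtain ⟨k, rfl⟩ := Nat.exists_eq_add_of_lt h
  have hm : (Δ_[1])^[m] (fun x ↦ x.choose m : ℕ → ℤ) = fun _ ↦ 1 := by
    simpa using fwdDiff_iter_choose 0 m
  rw [show m + k + 1 = k + 1 + m by ring, iterate_add_apply, hm, iterate_succ_apply,
    fwdDiff_const]
  funext x
  simp [fwdDiff_iter_eq_sum_shift]

lemma sum_neg_one_pow_mul_choose_mul_shifted_choose_eq_zero (R : Type*) [CommRing R]
    {m n : ℕ} (h : m < n) (i : ℕ) :
    ∑ k ∈ range (i + n + 1),
      (-1 : R) ^ (i + n + k) * (k.choose m : R) * (if i ≤ k then (n.choose (k - i) : R) else 0)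
      = 0 := by
  have hΔ := congr_arg (Int.cast : ℤ → R) (congr_fun (fwdDiff_iter_choose_eq_zero_of_lt h) i)
  rw [fwdDiff_iter_eq_sum_shift] at hΔ
  push_cast [smul_eq_mul, mul_one, Pi.zero_apply, Int.cast_zero] at hΔ
  rw [add_assoc, sum_range_add, sum_eq_zero fun k hk ↦ by simp [(mem_range.1 hk).not_ge], zero_add,
    ← hΔ]
  refine sum_congr rfl fun t ht ↦ ?_
  obtain ⟨d, rfl⟩ := Nat.exists_eq_add_of_le (Nat.lt_succ_iff.1 (mem_range.1 ht))
  simp only [le_add_iff_nonneg_right, zero_le, if_true, add_tsub_cancel_left]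
  rw [show i + (t + d) + (i + t) = d + 2 * (i + t) by ring, pow_add, pow_mul, neg_one_sq, one_pow,
    mul_one, mul_right_comm]

lemma mul_ite_choose_succ_eq {R : Type*} [CommRing R] (x : R) (i j k : ℕ) :
    (x + k) * (if i ≤ k then ((j + 1).choose (k - i) : R) else 0) =
      (x + i + j + 1) * (if i + 1 ≤ k then (j.choose (k - (i + 1)) : R) else 0) +
        (x + i) * (if i ≤ k then (j.choose (k - i) : R) else 0) := by
  rcases lt_or_ge k i with hk | hk
  · simp [hk.not_ge, show ¬ i + 1 ≤ k by omega]
  obtain ⟨t, rfl⟩ := Nat.exists_eq_add_of_le hk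
  cases t with
  | zero => simp
  | succ t =>
    have hpascal : ((j + 1).choose (t + 1) : R) = j.choose t + j.choose (t + 1) := by
      rw [Nat.choose_succ_succ', Nat.cast_add]
    have habsorb : ((j + 1).choose (t + 1) * (t + 1) : R) = (j + 1) * j.choose t := by
      exact_mod_cast congrArg (Nat.cast : ℕ → R) (Nat.add_one_mul_choose_eq j t).symm
    simp only [le_add_iff_nonneg_right, zero_le, if_true, add_tsub_cancel_left,
      show i + 1 ≤ i + (t + 1) by omega, show i + (t + 1) - (i + 1) = t by omega]
    push_cast
    linear_combination (x + i) * hpascal + habsorb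

section

variable {K : Type*} [Field K]

def partialFractionSum (x : K) (i j : ℕ) : K :=
  ∑ k ∈ range (i + j + 1),
    (-1 : K) ^ (i + j + k) / (x + k) * (k.choose j : K) *
      (if i ≤ k then (j.choose (k - i) : K) else 0)

lemma partialFractionSum_zero_left (x : K) (j : ℕ) :
    partialFractionSum x 0 j = 1 / (x + j) := by
  rw [partialFractionSum, sum_eq_single j]
  · simp [← two_mul, pow_mul]
  · intro k hk hkj
    have : k < j := by simp at hk; omega
    simp [Nat.choose_eq_zero_of_lt this]
  · simp

lemma partialFractionSum_succ_left {x : K} (hx : ∀ k : ℕ, x + k ≠ 0) (i j : ℕ) :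
    (x + i + j + 1) * partialFractionSum x (i + 1) j = (x + i) * partialFractionSum x i j := by
  have hext : partialFractionSum x i j = ∑ k ∈ range (i + (j + 1) + 1),
      (-1 : K) ^ (i + j + k) / (x + k) * (k.choose j : K) *
        (if i ≤ k then (j.choose (k - i) : K) else 0) := by
    rw [partialFractionSum, show i + (j + 1) + 1 = i + j + 1 + 1 by ring,
      sum_range_succ _ (i + j + 1)]
    simp [show i + j + 1 - i = j + 1 by omega]
  rw [← sub_eq_zero, hext, partialFractionSum, show i + 1 + j + 1 = i + (j + 1) + 1 by ring,
    mul_sum, mul_sum, ← sum_sub_distrib]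
  refine (sum_congr rfl fun k _ ↦ ?_).trans
    (sum_neg_one_pow_mul_choose_mul_shifted_choose_eq_zero K (Nat.lt_add_one j) i)
  have hpascal : (if i ≤ k then ((j + 1).choose (k - i) : K) else 0) =
      ((x + i + j + 1) * (if i + 1 ≤ k then (j.choose (k - (i + 1)) : K) else 0) +
        (x + i) * (if i ≤ k then (j.choose (k - i) : K) else 0)) / (x + k) := by
    rw [eq_div_iff (hx k), mul_comm]
    exact mul_ite_choose_succ_eq x i j k
  have hsign : (-1 : K) ^ (i + j + k) = - (-1 : K) ^ (i + (j + 1) + k) := by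
    rw [show i + (j + 1) + k = i + j + k + 1 by ring, pow_succ, mul_neg_one, neg_neg]
  rw [hpascal, hsign, show i + 1 + j + k = i + (j + 1) + k by ring]
  ring

end

theorem partial_fraction_identity (i j : ℕ) (x : ℚ) (hx : ∀ m : ℕ, x ≠ -(m : ℚ)) :
    ∑ k ∈ Finset.range (i + j + 1),
        (-1 : ℚ) ^ (i + j + k) / (x + k) * (k.choose j : ℚ) *
          (if i ≤ k then (j.choose (k - i) : ℚ) else 0) =
      pochQ x i * pochQ x j / pochQ x (i + j + 1) := by
  have hx' : ∀ k : ℕ, x + k ≠ 0 := fun k h ↦ hx k (eq_neg_of_add_eq_zero_left h)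
  change partialFractionSum x i j = _
  induction i with
  | zero =>
    rw [partialFractionSum_zero_left, zero_add, pochQ_succ, pochQ, prod_range_zero, one_mul,
      div_mul_cancel_left₀ (pochQ_ne_zero hx' j), one_div]
  | succ i ih =>
    have hne : x + i + j + 1 ≠ 0 := by
      convert hx' (i + j + 1) using 1
      push_cast
      ring
    have hlast : pochQ x (i + 1 + j + 1) = pochQ x (i + j + 1) * (x + i + j + 1) := by
      rw [show i + 1 + j + 1 = i + j + 1 + 1 by ring, pochQ_succ]
      push_cast
      ring
    rw [← mul_right_inj' hne, partialFractionSum_succ_left hx', ih, hlast, pochQ_succ x i]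
    field_simp [pochQ_ne_zero hx']
end

section
/- Let p be an odd prime. For all i, j with 0 ≤ i, j ≤ p−1, (i+j+1)·C(i+j,j)·∑_{k=0}^{p-1} C(k,i)·C(k,j) ≡ p·(−1)^{i+j} (mod p²). -/
open Finset



lemma SS (n k r : ℕ) (hrk : r ≤ k) :
    n.choose k * k.choose r = n.choose r * (n - r).choose (k - r) := by
  rcases le_or_gt k n with hkn | hkn
  · have h1 := Nat.choose_mul_factorial_mul_factorial hkn
    have h2 := Nat.choose_mul_factorial_mul_factorial hrk
    have h3 := Nat.choose_mul_factorial_mul_factorial (le_trans hrk hkn)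
    have h4 : k - r ≤ n - r := by omega
    have h5 := Nat.choose_mul_factorial_mul_factorial h4
    have hpos : 0 < r.factorial * (k - r).factorial * (n - k).factorial :=
      Nat.mul_pos (Nat.mul_pos r.factorial_pos (k-r).factorial_pos) (n-k).factorial_pos
    apply Nat.eq_of_mul_eq_mul_right hpos
    have e1 : n - r - (k - r) = n - k := by omega
    calc n.choose k * k.choose r * (r.factorial * (k - r).factorial * (n - k).factorial)
        = (k.choose r * r.factorial * (k - r).factorial) * (n.choose k * (n-k).factorial) := by
          ring
      _ = k.factorial * (n.choose k * (n-k).factorial) := by rw [h2]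
      _ = n.factorial := by rw [← h1]; ring
      _ = ((n-r).choose (k-r) * (k-r).factorial * (n - r - (k-r)).factorial) *
            (n.choose r * r.factorial) := by rw [h5, ← h3]; ring
      _ = n.choose r * (n - r).choose (k - r) *
            (r.factorial * (k - r).factorial * (n - k).factorial) := by rw [e1]; ring
  · rw [Nat.choose_eq_zero_of_lt hkn, Nat.zero_mul]
    rcases le_or_gt r n with hrn | hrn
    · rw [Nat.choose_eq_zero_of_lt (show n - r < k - r by omega), Nat.mul_zero]
    · rw [Nat.choose_eq_zero_of_lt hrn, Nat.zero_mul]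



-- hockey stick
lemma hockey (N m : ℕ) : ∑ k ∈ range N, k.choose m = N.choose (m+1) := by
  induction N with
  | zero => simp
  | succ N ih => rw [Finset.sum_range_succ, ih, Nat.choose_succ_succ (N) (m), Nat.add_comm]

-- Vandermonde, range form
lemma VDM (m n w : ℕ) : (m + n).choose w = ∑ s ∈ range (w+1), m.choose (w - s) * n.choose s := by
  rw [add_comm m n, Nat.add_choose_eq, Finset.Nat.sum_antidiagonal_eq_sum_range_succ_mk]
  exact Finset.sum_congr rfl fun s _ => mul_comm _ _

-- shrink a sum range when the tail is zero
lemma shrink {f : ℕ → ℕ} {m M : ℕ} (hm : m ≤ M) (h : ∀ s, m ≤ s → s < M → f s = 0) :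
    ∑ s ∈ range M, f s = ∑ s ∈ range m, f s := by
  refine (Finset.sum_subset (Finset.range_subset_range.2 hm) ?_).symm
  intro x hx hx2
  exact h x (by simpa using hx2) (by simpa using hx)


lemma inner_eval (i j b : ℕ) :
    ∑ t ∈ range (j+1), i.choose t * j.choose t * t.choose b
      = j.choose b * (i + j - b).choose j := by
  rcases lt_or_ge j b with hjb | hbj
  · rw [Nat.choose_eq_zero_of_lt hjb, Nat.zero_mul]
    refine Finset.sum_eq_zero fun t ht => ?_
    have htj : t ≤ j := by simpa [Nat.lt_succ_iff] using ht
    rw [Nat.choose_eq_zero_of_lt (by omega : t < b), Nat.mul_zero]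
  -- b ≤ j
  · have split : ∑ t ∈ range (j+1), i.choose t * j.choose t * t.choose b
        = ∑ u ∈ range (j+1-b), i.choose (b+u) * j.choose (b+u) * (b+u).choose b := by
      rw [Finset.range_eq_Ico, ← Finset.sum_Ico_consecutive _ (Nat.zero_le b) (by omega : b ≤ j+1)]
      have z : ∑ t ∈ Finset.Ico 0 b, i.choose t * j.choose t * t.choose b = 0 := by
        refine Finset.sum_eq_zero fun t ht => ?_
        have : t < b := (Finset.mem_Ico.1 ht).2
        rw [Nat.choose_eq_zero_of_lt this, Nat.mul_zero]
      rw [z, zero_add, Finset.sum_Ico_eq_sum_range]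
    rw [split]
    have step : ∀ u ∈ range (j+1-b), i.choose (b+u) * j.choose (b+u) * (b+u).choose b
        = j.choose b * (i.choose (b+u) * (j-b).choose u) := by
      intro u hu
      rw [mul_assoc, SS j (b+u) b (Nat.le_add_right b u)]
      have : b + u - b = u := by omega
      rw [this]; ring
    rw [Finset.sum_congr rfl step, ← Finset.mul_sum]
    congr 1
    rcases lt_or_ge i b with hib | hbi
    · rw [Nat.choose_eq_zero_of_lt (by omega : i + j - b < j)]
      exact Finset.sum_eq_zero fun u hu => by
        rw [Nat.choose_eq_zero_of_lt (by omega : i < b + u), Nat.zero_mul]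
    · -- b ≤ i
      have key : (i + (j-b)).choose (i-b)
          = ∑ s ∈ range ((i-b)+1), i.choose ((i-b) - s) * (j-b).choose s := VDM i (j-b) (i-b)
      have sym : ∀ s, s ≤ i - b → i.choose ((i-b) - s) = i.choose (b+s) := by
        intro s hs
        have h1 : (i-b) - s ≤ i := by omega
        have := Nat.choose_symm h1
        rw [← this]
        congr 1; omega
      -- both sums equal sum over range (min (i-b) (j-b) + 1)
      have hm : min (i-b) (j-b) + 1 ≤ j + 1 - b := by omega
      have hm2 : min (i-b) (j-b) + 1 ≤ (i-b) + 1 := by omega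
      have s1 : ∑ u ∈ range (j+1-b), i.choose (b+u) * (j-b).choose u
          = ∑ u ∈ range (min (i-b) (j-b) + 1), i.choose (b+u) * (j-b).choose u := by
        refine shrink hm fun s hs hs2 => ?_
        rcases lt_or_ge (i-b) s with h1 | h1
        · rw [Nat.choose_eq_zero_of_lt (by omega : i < b + s), Nat.zero_mul]
        · rw [Nat.choose_eq_zero_of_lt (by omega : j - b < s), Nat.mul_zero]
      have s2 : ∑ s ∈ range ((i-b)+1), i.choose ((i-b) - s) * (j-b).choose s
          = ∑ u ∈ range (min (i-b) (j-b) + 1), i.choose (b+u) * (j-b).choose u := by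
        have t1 : ∑ s ∈ range ((i-b)+1), i.choose ((i-b) - s) * (j-b).choose s
            = ∑ s ∈ range (min (i-b) (j-b) + 1), i.choose ((i-b) - s) * (j-b).choose s :=
          shrink hm2 fun s hs hs2 => by
            rw [Nat.choose_eq_zero_of_lt (by omega : j - b < s), Nat.mul_zero]
        rw [t1]
        refine Finset.sum_congr rfl fun s hs => ?_
        have hsle : s ≤ i - b := by have := Finset.mem_range.1 hs; omega
        rw [sym s hsle]
      rw [s1, ← s2, ← key]
      have e2 : i + (j - b) = i + j - b := by omega
      rw [e2]
      exact Nat.choose_symm_of_eq_add (by omega : i + j - b = (i-b) + j)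


lemma swapL (i j K N : ℕ) (hjN : j ≤ N) :
    ∑ t ∈ range (j+1), i.choose t * j.choose t * (K+t).choose N
      = ∑ b ∈ range (j+1), (i+j-b).choose j * j.choose b * K.choose (N-b) := by
  have expand : ∀ t ∈ range (j+1), i.choose t * j.choose t * (K+t).choose N
      = ∑ b ∈ range (N+1), K.choose (N-b) * (i.choose t * j.choose t * t.choose b) := by
    intro t _
    rw [VDM K t N, Finset.mul_sum]
    exact Finset.sum_congr rfl fun b _ => by ring
  rw [Finset.sum_congr rfl expand, Finset.sum_comm]
  have inner : ∀ b ∈ range (N+1),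
      ∑ t ∈ range (j+1), K.choose (N-b) * (i.choose t * j.choose t * t.choose b)
        = (i+j-b).choose j * j.choose b * K.choose (N-b) := by
    intro b _
    rw [← Finset.mul_sum, inner_eval]; ring
  rw [Finset.sum_congr rfl inner]
  exact shrink (by omega) fun b hb hb2 => by
    rw [Nat.choose_eq_zero_of_lt (by omega : j < b), Nat.mul_zero, Nat.zero_mul]

lemma lemE (i j k : ℕ) : k.choose i * k.choose j
    = ∑ s ∈ range (j+1), (i+j-s).choose j * j.choose s * k.choose (i+j-s) := by
  rcases lt_or_ge k j with hkj | hjk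
  · rw [Nat.choose_eq_zero_of_lt hkj, Nat.mul_zero]
    refine (Finset.sum_eq_zero fun s hs => ?_).symm
    have hsj : s ≤ j := by have := Finset.mem_range.1 hs; omega
    rcases le_or_gt (i+j-s) k with h1 | h1
    · rw [Nat.choose_eq_zero_of_lt (by omega : i + j - s < j), Nat.zero_mul, Nat.zero_mul]
    · rw [Nat.choose_eq_zero_of_lt h1, Nat.mul_zero]
  · have shrink1 : ∑ s ∈ range (j+1), (i+j-s).choose j * j.choose s * k.choose (i+j-s)
        = ∑ s ∈ range (min i j + 1), (i+j-s).choose j * j.choose s * k.choose (i+j-s) :=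
      shrink (by omega) fun s hs hs2 => by
        rw [Nat.choose_eq_zero_of_lt (by omega : i + j - s < j), Nat.zero_mul, Nat.zero_mul]
    have step : ∀ s ∈ range (min i j + 1),
        (i+j-s).choose j * j.choose s * k.choose (i+j-s)
          = k.choose j * ((k-j).choose (i-s) * j.choose s) := by
      intro s hs
      have hsi : s ≤ i := by have := Finset.mem_range.1 hs; omega
      have h2 := SS k (i+j-s) j (by omega)
      have e1 : i + j - s - j = i - s := by omega
      rw [e1] at h2
      calc (i+j-s).choose j * j.choose s * k.choose (i+j-s)
          = (k.choose (i+j-s) * (i+j-s).choose j) * j.choose s := by ring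
        _ = (k.choose j * (k-j).choose (i-s)) * j.choose s := by rw [h2]
        _ = k.choose j * ((k-j).choose (i-s) * j.choose s) := by ring
    have vdm : k.choose i = ∑ s ∈ range (i+1), (k-j).choose (i-s) * j.choose s := by
      have := VDM (k-j) j i
      rwa [Nat.sub_add_cancel hjk] at this
    have shrink2 : ∑ s ∈ range (i+1), (k-j).choose (i-s) * j.choose s
        = ∑ s ∈ range (min i j + 1), (k-j).choose (i-s) * j.choose s :=
      shrink (by omega) fun s hs hs2 => by
        rw [Nat.choose_eq_zero_of_lt (by omega : j < s), Nat.mul_zero]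
    rw [shrink1, Finset.sum_congr rfl step, ← Finset.mul_sum, ← shrink2, ← vdm, mul_comm]


lemma lemQ (r : ℕ) : ∀ a m : ℕ, a ≤ r → a ≤ m →
    ∑ t ∈ range (m+1), (-1:ℤ)^t * (a.choose t : ℤ) * ((m-t).choose r : ℤ)
      = ((m-a).choose (r-a) : ℤ) := by
  intro a
  induction a with
  | zero =>
    intro m _ _
    rw [Finset.sum_eq_single 0]
    · simp
    · intro t _ ht
      rw [Nat.choose_eq_zero_of_lt (by omega : 0 < t)]
      push_cast; ring
    · intro h; exact absurd (Finset.mem_range.2 (by omega)) h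
  | succ a ih =>
    intro m har ham
    have ihm := ih m (by omega) (by omega)
    have ihm1 := ih (m-1) (by omega) (by omega)
    have hm1 : m - 1 + 1 = m := by omega
    rw [hm1] at ihm1
    have hidx : (m-1) - a = m - (a+1) := by omega
    rw [hidx] at ihm1
    rw [Finset.sum_range_succ']
    have e : ∀ t ∈ range m, (-1:ℤ)^(t+1) * (((a+1).choose (t+1) : ℕ) : ℤ) * (((m-(t+1)).choose r : ℕ) : ℤ)
        = (-1:ℤ)^(t+1) * ((a.choose (t+1) : ℕ) : ℤ) * (((m-(t+1)).choose r : ℕ) : ℤ)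
          + (-(1:ℤ)) * ((-1:ℤ)^t * ((a.choose t : ℕ) : ℤ) * ((((m-1)-t).choose r : ℕ) : ℤ)) := by
      intro t ht
      have hmt : m - (t+1) = (m-1) - t := by omega
      rw [Nat.choose_succ_succ, hmt]
      push_cast
      ring
    rw [Finset.sum_congr rfl e, Finset.sum_add_distrib, ← Finset.mul_sum]
    have recomb : (∑ t ∈ range m, (-1:ℤ)^(t+1) * ((a.choose (t+1) : ℕ) : ℤ) * (((m-(t+1)).choose r : ℕ) : ℤ))
          + (-1:ℤ)^0 * ((a.choose 0 : ℕ) : ℤ) * (((m-0).choose r : ℕ) : ℤ)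
        = ∑ t ∈ range (m+1), (-1:ℤ)^t * ((a.choose t : ℕ) : ℤ) * (((m-t).choose r : ℕ) : ℤ) :=
      (Finset.sum_range_succ' (fun t => (-1:ℤ)^t * ((a.choose t : ℕ) : ℤ) * (((m-t).choose r : ℕ) : ℤ)) m).symm
    rw [ihm] at recomb
    rw [ihm1]
    have pas : (((m-a).choose (r-a) : ℕ) : ℤ)
        = (((m-(a+1)).choose (r-(a+1)) : ℕ) : ℤ) + (((m-(a+1)).choose (r-a) : ℕ) : ℤ) := by
      have h1 : m - a = (m-(a+1)) + 1 := by omega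
      have h2 : r - a = (r-(a+1)) + 1 := by omega
      rw [h1, h2, Nat.choose_succ_succ]
      push_cast; ring
    simp only [pow_zero, Nat.choose_zero_right, Nat.sub_zero, Nat.cast_one, one_mul] at recomb ⊢
    linarith [recomb, pas]

lemma lemD (i j : ℕ) :
    ∑ t ∈ range (i+j+1), (-1:ℤ)^t * (i.choose t : ℤ) * ((i+j-t).choose i : ℤ) = 1 := by
  have := lemQ i i (i+j) le_rfl (by omega)
  rw [this]
  simp


lemma sumCong {s : Finset ℕ} {f g : ℕ → ℤ} {n : ℤ} (h : ∀ x ∈ s, f x ≡ g x [ZMOD n]) :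
    (∑ x ∈ s, f x) ≡ (∑ x ∈ s, g x) [ZMOD n] := by
  classical
  induction s using Finset.induction_on with
  | empty => simp
  | @insert a s' hx ih =>
    rw [Finset.sum_insert hx, Finset.sum_insert hx]
    exact (h a (Finset.mem_insert_self a s')).add (ih fun x hxx => h x (Finset.mem_insert_of_mem hxx))

lemma descCong (p : ℕ) (hp : p.Prime) (n t : ℕ) (ht : t < p) (htn : t ≤ n) :
    (((p+t).descFactorial (n+1) : ℕ) : ℤ)
      ≡ (p:ℤ) * (-1)^(n-t) * (t.factorial : ℤ) * ((n-t).factorial : ℤ) [ZMOD (p:ℤ)^2] := by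
  rcases lt_or_ge (p+t) (n+1) with htr | hntr
  · -- truncated: both sides ≡ 0
    rw [Nat.descFactorial_eq_zero_iff_lt.2 htr]
    have hpn : p ≤ n - t := by omega
    obtain ⟨c, hc⟩ := (Nat.Prime.dvd_factorial hp).2 hpn
    push_cast [hc]
    symm
    rw [Int.modEq_zero_iff_dvd]
    exact ⟨(-1)^(n-t) * (t.factorial : ℤ) * c, by ring⟩
  · -- no truncation
    have hcast : (((p+t).descFactorial (n+1) : ℕ) : ℤ) = ∏ m ∈ range (n+1), ((p:ℤ) + t - m) := by
      rw [Nat.descFactorial_eq_prod_range, Nat.cast_prod]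
      refine Finset.prod_congr rfl fun m hm => ?_
      have hm' : m ≤ p + t := by have := Finset.mem_range.1 hm; omega
      push_cast [Nat.cast_sub hm']
      ring
    rw [hcast]
    have hsplit : ∏ m ∈ range (n+1), ((p:ℤ) + t - m)
        = (p:ℤ) * ((∏ m ∈ range t, ((p:ℤ) + t - m)) * (∏ m ∈ Ico (t+1) (n+1), ((p:ℤ) + t - m))) := by
      rw [← Finset.prod_range_mul_prod_Ico _ (by omega : t+1 ≤ n+1), Finset.prod_range_succ]
      have : (p:ℤ) + t - t = p := by ring
      rw [this]; ring
    rw [hsplit]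
    have hAB : (∏ m ∈ range t, ((p:ℤ) + t - m)) * (∏ m ∈ Ico (t+1) (n+1), ((p:ℤ) + t - m))
        ≡ ((-1:ℤ)^(n-t) * (t.factorial : ℤ) * ((n-t).factorial : ℤ)) [ZMOD (p:ℤ)] := by
      have : ((p:ℤ)) = ((p:ℕ) : ℤ) := rfl
      rw [← ZMod.intCast_eq_intCast_iff]
      push_cast
      have hA : ∏ m ∈ range t, ((p:ZMod p) + t - m) = (t.factorial : ZMod p) := by
        have h1 : (t.factorial : ZMod p) = ∏ m ∈ range t, ((t - m : ℕ) : ZMod p) := by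
          rw [← Nat.cast_prod, ← Nat.descFactorial_eq_prod_range, Nat.descFactorial_self]
        rw [h1]
        refine Finset.prod_congr rfl fun m hm => ?_
        have hm' : m ≤ t := by have := Finset.mem_range.1 hm; omega
        rw [Nat.cast_sub hm', ZMod.natCast_self]
        ring
      have hB : ∏ m ∈ Ico (t+1) (n+1), ((p:ZMod p) + t - m)
          = (-1:ZMod p)^(n-t) * ((n-t).factorial : ZMod p) := by
        rw [Finset.prod_Ico_eq_prod_range]
        have hnt : n + 1 - (t+1) = n - t := by omega
        rw [hnt]
        have step : ∀ u ∈ range (n-t), ((p:ZMod p) + t - ((t+1+u : ℕ) : ZMod p)) = (-1) * ((u+1 : ℕ) : ZMod p) := by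
          intro u _
          rw [ZMod.natCast_self]
          push_cast
          ring
        rw [Finset.prod_congr rfl step, Finset.prod_mul_distrib, Finset.prod_const,
          Finset.card_range, ← Nat.cast_prod, Finset.prod_range_add_one_eq_factorial]
      rw [hA, hB]
      ring
    have hfin := hAB.mul_left' (c := (p:ℤ))
    have e2 : (p:ℤ) * ((-1:ℤ)^(n-t) * (t.factorial : ℤ) * ((n-t).factorial : ℤ))
        = (p:ℤ) * (-1)^(n-t) * (t.factorial : ℤ) * ((n-t).factorial : ℤ) := by ring
    have e3 : (p:ℤ) * (p:ℤ) = (p:ℤ)^2 := by ring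
    rwa [e2, e3] at hfin


lemma lemF (i j t : ℕ) (htj : t ≤ j) :
    i.choose t * j.choose t * t.factorial * (i+j-t).factorial
      = i.factorial * j.factorial * ((i+j-t).choose i * i.choose t) := by
  rcases le_or_gt t i with hti | hti
  · apply Nat.eq_of_mul_eq_mul_right (Nat.factorial_pos (j-t))
    have h1 := Nat.choose_mul_factorial_mul_factorial htj            -- C(j,t) t! (j-t)! = j!
    have h2 : (i+j-t).choose i * i.factorial * (j-t).factorial = (i+j-t).factorial := by
      have := Nat.choose_mul_factorial_mul_factorial (by omega : i ≤ i+j-t)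
      have e : i + j - t - i = j - t := by omega
      rwa [e] at this
    calc i.choose t * j.choose t * t.factorial * (i+j-t).factorial * (j-t).factorial
        = i.choose t * (j.choose t * t.factorial * (j-t).factorial) * (i+j-t).factorial := by ring
      _ = i.choose t * j.factorial * (i+j-t).factorial := by rw [h1]
      _ = j.factorial * i.choose t * ((i+j-t).choose i * i.factorial * (j-t).factorial) := by
          rw [h2]; ring
      _ = i.factorial * j.factorial * ((i+j-t).choose i * i.choose t) * (j-t).factorial := by ring
  · rw [Nat.choose_eq_zero_of_lt hti]
    ring

lemma SUMeq (i j p : ℕ) :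
    ∑ k ∈ range p, k.choose i * k.choose j
      = ∑ t ∈ range (j+1), i.choose t * j.choose t * (p+t).choose (i+j+1) := by
  have step1 : ∑ k ∈ range p, k.choose i * k.choose j
      = ∑ s ∈ range (j+1), (i+j-s).choose j * j.choose s * p.choose (i+j-s+1) := by
    calc ∑ k ∈ range p, k.choose i * k.choose j
        = ∑ k ∈ range p, ∑ s ∈ range (j+1), (i+j-s).choose j * j.choose s * k.choose (i+j-s) :=
          Finset.sum_congr rfl fun k _ => lemE i j k
      _ = ∑ s ∈ range (j+1), ∑ k ∈ range p, (i+j-s).choose j * j.choose s * k.choose (i+j-s) :=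
          Finset.sum_comm
      _ = ∑ s ∈ range (j+1), (i+j-s).choose j * j.choose s * p.choose (i+j-s+1) := by
          refine Finset.sum_congr rfl fun s _ => ?_
          rw [← Finset.mul_sum, hockey]
  rw [step1, swapL i j p (i+j+1) (by omega)]
  refine Finset.sum_congr rfl fun b hb => ?_
  have hbj : b ≤ j := by have := Finset.mem_range.1 hb; omega
  have e : i + j + 1 - b = i + j - b + 1 := by omega
  rw [e]


theorem sum_binom_prod_mod (p : ℕ) (hp : p.Prime) (hp2 : p ≠ 2)
    (i j : ℕ) (hi : i ≤ p - 1) (hj : j ≤ p - 1) :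
    ((i + j + 1 : ℤ) * ((i + j).choose j : ℤ) *
        ∑ k ∈ Finset.range p, (k.choose i : ℤ) * (k.choose j : ℤ)) ≡
      (p : ℤ) * (-1) ^ (i + j) [ZMOD (p : ℤ) ^ 2] := by
  have hp1 := hp.one_lt
  have hip : i < p := by omega
  have hjp : j < p := by omega
  set n := i + j with hn
  -- cast the sum identity
  have hsum : (∑ k ∈ Finset.range p, (k.choose i : ℤ) * (k.choose j : ℤ))
      = ∑ t ∈ range (j+1), (i.choose t : ℤ) * (j.choose t : ℤ) * ((p+t).choose (n+1) : ℤ) := by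
    have := SUMeq i j p
    have h1 : (∑ k ∈ Finset.range p, (k.choose i : ℤ) * (k.choose j : ℤ))
        = ((∑ k ∈ range p, k.choose i * k.choose j : ℕ) : ℤ) := by push_cast; rfl
    rw [h1, this]
    push_cast; rfl
  -- key congruence
  have key : ((n+1).factorial : ℤ) *
        (∑ t ∈ range (j+1), (i.choose t : ℤ) * (j.choose t : ℤ) * ((p+t).choose (n+1) : ℤ))
      ≡ (p:ℤ) * (-1)^n * (i.factorial : ℤ) * (j.factorial : ℤ) [ZMOD (p:ℤ)^2] := by
    have h3 : ((n+1).factorial : ℤ) *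
          (∑ t ∈ range (j+1), (i.choose t : ℤ) * (j.choose t : ℤ) * ((p+t).choose (n+1) : ℤ))
        = ∑ t ∈ range (j+1),
            (i.choose t : ℤ) * (j.choose t : ℤ) * (((p+t).descFactorial (n+1) : ℕ) : ℤ) := by
      rw [Finset.mul_sum]
      refine Finset.sum_congr rfl fun t _ => ?_
      rw [Nat.descFactorial_eq_factorial_mul_choose]
      push_cast; ring
    rw [h3]
    have h4 : (∑ t ∈ range (j+1),
            (i.choose t : ℤ) * (j.choose t : ℤ) * (((p+t).descFactorial (n+1) : ℕ) : ℤ))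
        ≡ (∑ t ∈ range (j+1), (i.choose t : ℤ) * (j.choose t : ℤ) *
            ((p:ℤ) * (-1)^(n-t) * (t.factorial : ℤ) * ((n-t).factorial : ℤ))) [ZMOD (p:ℤ)^2] :=
      sumCong fun t ht => by
        have htj : t ≤ j := by have := Finset.mem_range.1 ht; omega
        exact Int.ModEq.mul_left _ (descCong p hp n t (by omega) (by omega))
    have h5 : (∑ t ∈ range (j+1), (i.choose t : ℤ) * (j.choose t : ℤ) *
            ((p:ℤ) * (-1)^(n-t) * (t.factorial : ℤ) * ((n-t).factorial : ℤ)))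
        = ((p:ℤ) * (-1)^n * (i.factorial : ℤ) * (j.factorial : ℤ)) *
            ∑ t ∈ range (j+1), (-1:ℤ)^t * (i.choose t : ℤ) * ((n-t).choose i : ℤ) := by
      rw [Finset.mul_sum]
      refine Finset.sum_congr rfl fun t ht => ?_
      have htj : t ≤ j := by have := Finset.mem_range.1 ht; omega
      have hF := lemF i j t htj
      have hsgn : (-1:ℤ)^n * (-1:ℤ)^t = (-1:ℤ)^(n-t) := by
        rw [← pow_add, show n + t = (n-t) + 2*t by omega, pow_add, pow_mul]
        norm_num
      calc (i.choose t : ℤ) * (j.choose t : ℤ) *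
            ((p:ℤ) * (-1)^(n-t) * (t.factorial : ℤ) * ((n-t).factorial : ℤ))
          = (p:ℤ) * (-1)^(n-t) *
              ((i.choose t * j.choose t * t.factorial * (i+j-t).factorial : ℕ) : ℤ) := by
            push_cast; rw [hn]; ring
        _ = (p:ℤ) * (-1)^(n-t) *
              ((i.factorial * j.factorial * ((i+j-t).choose i * i.choose t) : ℕ) : ℤ) := by
            rw [hF]
        _ = (p:ℤ) * ((-1:ℤ)^n * (-1:ℤ)^t) *
              ((i.factorial * j.factorial * ((i+j-t).choose i * i.choose t) : ℕ) : ℤ) := by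
            rw [hsgn]
        _ = (p:ℤ) * (-1)^n * (i.factorial : ℤ) * (j.factorial : ℤ) *
              ((-1:ℤ)^t * (i.choose t : ℤ) * ((n-t).choose i : ℤ)) := by
            push_cast; rw [hn]; ring
    rw [h5] at h4
    -- extend the inner sum to range (n+1) and apply lemD
    have hext : (∑ t ∈ range (j+1), (-1:ℤ)^t * (i.choose t : ℤ) * ((n-t).choose i : ℤ))
        = ∑ t ∈ range (n+1), (-1:ℤ)^t * (i.choose t : ℤ) * ((n-t).choose i : ℤ) := by
      refine Finset.sum_subset (Finset.range_subset_range.2 (by omega)) fun t ht ht2 => ?_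
      have h6 : j < t := by have := Finset.mem_range.1 ht; simp at ht2 ⊢; omega
      have h7 : t ≤ n := by have := Finset.mem_range.1 ht; omega
      rw [Nat.choose_eq_zero_of_lt (by omega : n - t < i)]
      push_cast; ring
    rw [hext, lemD i j, mul_one] at h4
    exact h4
  -- put everything together and cancel i! * j!
  have hfact : (i+j+1).factorial = i.factorial * j.factorial * ((i+j+1) * (i+j).choose j) := by
    have h8 := Nat.choose_mul_factorial_mul_factorial (by omega : j ≤ i + j)
    have e : i + j - j = i := by omega
    rw [e] at h8
    rw [Nat.factorial_succ, ← h8]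
    ring
  have hmul : ((i.factorial * j.factorial : ℕ) : ℤ) *
        ((i + j + 1 : ℤ) * ((i + j).choose j : ℤ) *
          ∑ k ∈ Finset.range p, (k.choose i : ℤ) * (k.choose j : ℤ))
      ≡ ((i.factorial * j.factorial : ℕ) : ℤ) * ((p : ℤ) * (-1) ^ (i + j)) [ZMOD (p:ℤ)^2] := by
    have e1 : ((i.factorial * j.factorial : ℕ) : ℤ) *
        ((i + j + 1 : ℤ) * ((i + j).choose j : ℤ) *
          ∑ k ∈ Finset.range p, (k.choose i : ℤ) * (k.choose j : ℤ))
        = ((n+1).factorial : ℤ) *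
          (∑ t ∈ range (j+1), (i.choose t : ℤ) * (j.choose t : ℤ) * ((p+t).choose (n+1) : ℤ)) := by
      rw [← hsum, hn, hfact]
      push_cast
      ring
    have e2 : ((i.factorial * j.factorial : ℕ) : ℤ) * ((p : ℤ) * (-1) ^ (i + j))
        = (p:ℤ) * (-1)^n * (i.factorial : ℤ) * (j.factorial : ℤ) := by
      push_cast; rw [hn]; ring
    rw [e1, e2]
    exact key
  -- cancel
  have hcop : Int.gcd ((p:ℤ)^2) ((i.factorial * j.factorial : ℕ) : ℤ) = 1 := by
    have : ((p:ℤ)^2) = ((p^2 : ℕ) : ℤ) := by push_cast; ring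
    rw [this, Int.gcd_natCast_natCast]
    apply Nat.Coprime.pow_left
    rw [Nat.Prime.coprime_iff_not_dvd hp]
    intro hdvd
    rcases (Nat.Prime.dvd_mul hp).1 hdvd with h | h
    · exact absurd (Nat.Prime.dvd_factorial hp |>.1 h) (by omega)
    · exact absurd (Nat.Prime.dvd_factorial hp |>.1 h) (by omega)
  have hpos : (0:ℤ) < (p:ℤ)^2 := by positivity
  have := Int.ModEq.cancel_left_div_gcd hpos hmul
  rwa [hcop, Nat.cast_one, Int.ediv_one] at this
end

section
/- The integers S(i,j) = C(2i,i)·C(2j,j)/C(i+j,i) satisfy the recurrence 4·S(i,j) = S(i+1,j) + S(i,j+1) for all nonnegative integers i, j. -/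
/-- S(i,j) = C(2i,i)·C(2j,j)/C(i+j,i), an integer by Von Szily's identity,
here computed in ℚ. -/
def Sq (i j : ℕ) : ℚ := ((2 * i).choose i : ℚ) * ((2 * j).choose j : ℚ) / ((i + j).choose i : ℚ)

theorem S_recurrence (i j : ℕ) : 4 * Sq i j = Sq (i + 1) j + Sq i (j + 1) := by
  have hc : ((i + j).choose i : ℚ) ≠ 0 := by
    exact_mod_cast (Nat.choose_pos (Nat.le_add_right i j)).ne'
  have hi : ((i : ℚ) + 1) ≠ 0 := by positivity
  have hj : ((j : ℚ) + 1) ≠ 0 := by positivity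
  have hij : ((i : ℚ) + j + 1) ≠ 0 := by positivity
  have e1 : (((2 * (i + 1)).choose (i + 1) : ℚ)) * (i + 1) = 2 * (2 * i + 1) * ((2 * i).choose i) := by
    have := Nat.succ_mul_centralBinom_succ i
    simp only [Nat.centralBinom] at this
    exact_mod_cast by linarith [this]
  have e2 : (((2 * (j + 1)).choose (j + 1) : ℚ)) * (j + 1) = 2 * (2 * j + 1) * ((2 * j).choose j) := by
    have := Nat.succ_mul_centralBinom_succ j
    simp only [Nat.centralBinom] at this
    exact_mod_cast by linarith [this]
  have d1 : ((((i + 1) + j).choose (i + 1) : ℚ)) * (i + 1) = (i + j + 1) * ((i + j).choose i) := by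
    have h := Nat.add_one_mul_choose_eq (i + j) i
    have key : ((i + 1) + j).choose (i + 1) * (i + 1) = (i + j + 1) * (i + j).choose i := by
      rw [show (i + 1) + j = (i + j) + 1 by omega]
      simpa [Nat.succ_eq_add_one] using h.symm
    exact_mod_cast congrArg (Nat.cast : ℕ → ℚ) key
  have d2 : (((i + (j + 1)).choose i : ℚ)) * (j + 1) = (i + j + 1) * ((i + j).choose i) := by
    have hsym : (i + (j + 1)).choose i = ((i + j) + 1).choose (j + 1) := by
      rw [show i + (j + 1) = (i + j) + 1 by omega]
      have := Nat.choose_symm (show j + 1 ≤ (i + j) + 1 by omega)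
      simpa [show (i + j) + 1 - (j + 1) = i by omega] using this
    have hsym2 : (i + j).choose j = (i + j).choose i := by
      have := Nat.choose_symm (show j ≤ i + j by omega)
      simpa [show i + j - j = i by omega] using this.symm
    have h := Nat.add_one_mul_choose_eq (i + j) j
    have key : (i + (j + 1)).choose i * (j + 1) = (i + j + 1) * (i + j).choose i := by
      rw [hsym, ← hsym2]
      simpa [Nat.succ_eq_add_one] using h.symm
    exact_mod_cast congrArg (Nat.cast : ℕ → ℚ) key
  have E1 : ((2 * (i + 1)).choose (i + 1) : ℚ) = 2 * (2 * i + 1) * ((2 * i).choose i) / (i + 1) :=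
    eq_div_iff hi |>.mpr e1
  have E2 : ((2 * (j + 1)).choose (j + 1) : ℚ) = 2 * (2 * j + 1) * ((2 * j).choose j) / (j + 1) :=
    eq_div_iff hj |>.mpr e2
  have D1 : (((i + 1) + j).choose (i + 1) : ℚ) = (i + j + 1) * ((i + j).choose i) / (i + 1) :=
    eq_div_iff hi |>.mpr d1
  have D2 : ((i + (j + 1)).choose i : ℚ) = (i + j + 1) * ((i + j).choose i) / (j + 1) :=
    eq_div_iff hj |>.mpr d2
  unfold Sq
  rw [E1, E2, D1, D2]
  field_simp
  ring
end
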